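/- arXiv:math/0701786 — 5 statements merged into one kernel-verified Lean document; each statement's English description precedes it below -/
import Mathlib

section
/- Let 1 ≤ q, q' ≤ ∞ with 1/q + 1/q' = 1, and let f ∈ L^q(ℝ) and g ∈ L^{q'}(ℝ) be nonnegative, even functions that are nonincreasing on [0,∞). Then the convolution f∗g, defined by (f∗g)(x) = ∫_ℝ f(y) g(x−y) dy, is a nonnegative even function that is nonincreasing on [0,∞); in particular (f∗g)(x) ≤ (f∗g)(0) for all x ∈ ℝ. -/
open MeasureTheory ENNReal

/-- Convolution on `ℝ` (Lebesgue measure): `(f ∗ g)(x) = ∫ f(y) g(x−y) dy`. -/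
noncomputable def convR (f g : ℝ → ℝ) (x : ℝ) : ℝ := ∫ y : ℝ, f y * g (x - y)

/-! For `0 ≤ a ≤ b` put `s = a + b` and `D y = f y g(a - y) - f y g(b - y)`, so that
`∫ D = (f ∗ g)(a) - (f ∗ g)(b)`. Since `g` is even, `D y + D (s - y)` equals
`(f y - f (s - y)) (g (a - y) - g (b - y))`, and both factors have the sign of `s - 2y`
because `f` and `g` decrease in `|·|`. Integrating and using invariance of Lebesgue measure
under `y ↦ s - y` gives `2 ∫ D ≥ 0`. -/

open Set

theorem Function.Even.apply_le_of_abs_le {α β : Type*} [AddCommGroup α] [LinearOrder α]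
    [IsOrderedAddMonoid α] [Preorder β] {f : α → β} (hf : f.Even) (hfm : AntitoneOn f (Ici 0))
    {u v : α} (h : |u| ≤ |v|) : f v ≤ f u := by
  have habs : ∀ x, f |x| = f x := fun x => by
    rcases abs_choice x with hx | hx <;> rw [hx]; exact hf x
  rw [← habs u, ← habs v]
  exact hfm (abs_nonneg u) ((abs_nonneg u).trans h) h

theorem sub_mul_sub_nonneg_of_even_antitoneOn {α R : Type*} [CommRing α] [LinearOrder α]
    [IsStrictOrderedRing α] [Ring R] [PartialOrder R] [IsOrderedRing R] {f g : α → R}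
    (hf : f.Even) (hfm : AntitoneOn f (Ici 0)) (hg : g.Even) (hgm : AntitoneOn g (Ici 0))
    {a b : α} (ha : 0 ≤ a) (hab : a ≤ b) (y : α) :
    0 ≤ (f y - f (a + b - y)) * (g (a - y) - g (b - y)) := by
  rcases le_total (2 * y) (a + b) with hy | hy
  · have hf' : f (a + b - y) ≤ f y := hf.apply_le_of_abs_le hfm (sq_le_sq.mp (by nlinarith))
    have hg' : g (b - y) ≤ g (a - y) := hg.apply_le_of_abs_le hgm (sq_le_sq.mp (by nlinarith))
    exact mul_nonneg (sub_nonneg.mpr hf') (sub_nonneg.mpr hg')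
  · have hf' : f y ≤ f (a + b - y) := hf.apply_le_of_abs_le hfm (sq_le_sq.mp (by nlinarith))
    have hg' : g (a - y) ≤ g (b - y) := hg.apply_le_of_abs_le hgm (sq_le_sq.mp (by nlinarith))
    exact mul_nonneg_of_nonpos_of_nonpos (sub_nonpos.mpr hf') (sub_nonpos.mpr hg')

section Group

variable {G : Type*} [MeasurableSpace G] [AddGroup G] [MeasurableAdd G] [MeasurableNeg G]
  {μ : Measure G} [μ.IsAddLeftInvariant] [μ.IsNegInvariant]

theorem integral_nonneg_of_add_comp_sub_left_nonneg {D : G → ℝ} (hD : Integrable D μ) (s : G)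
    (h : ∀ y, 0 ≤ D y + D (s - y)) : 0 ≤ ∫ y, D y ∂μ := by
  have hsum : 0 ≤ ∫ y, D y + D (s - y) ∂μ := integral_nonneg h
  rw [integral_add hD (hD.comp_sub_left s), integral_sub_left_eq_self] at hsum
  linarith

theorem MeasureTheory.MemLp.integrable_mul_comp_sub {𝕜 : Type*} [NormedRing 𝕜] {p q : ℝ≥0∞}
    [p.HolderConjugate q] {f g : G → 𝕜} (hf : MemLp f p μ) (hg : MemLp g q μ) (x : G) :
    Integrable (fun y => f y * g (x - y)) μ :=
  hf.integrable_mul (hg.comp_measurePreserving (Measure.measurePreserving_sub_left μ x))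

end Group

theorem even_convR {f g : ℝ → ℝ} (hf : f.Even) (hg : g.Even) :
    (convR f g).Even := by
  intro x
  rw [convR, convR, ← integral_neg_eq_self]
  congr 1 with y
  rw [hf, ← hg (x - y), neg_sub, sub_neg_eq_add, neg_add_eq_sub]

theorem antitoneOn_convR {f g : ℝ → ℝ} (hint : ∀ x, Integrable (fun y => f y * g (x - y)))
    (hf : f.Even) (hfm : AntitoneOn f (Ici 0)) (hg : g.Even) (hgm : AntitoneOn g (Ici 0)) :
    AntitoneOn (convR f g) (Ici 0) := by
  intro a ha b _ hab
  set D := fun y => f y * g (a - y) - f y * g (b - y)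
  have hreflect : ∀ y, D y + D (a + b - y) = (f y - f (a + b - y)) * (g (a - y) - g (b - y)) := by
    intro y
    have hgb : g (a - (a + b - y)) = g (b - y) := by rw [← hg]; congr 1; ring
    have hga : g (b - (a + b - y)) = g (a - y) := by rw [← hg]; congr 1; ring
    simp only [D, hgb, hga]
    ring
  have hD := integral_nonneg_of_add_comp_sub_left_nonneg ((hint a).sub (hint b)) (a + b)
    fun y => (hreflect y).symm ▸ sub_mul_sub_nonneg_of_even_antitoneOn hf hfm hg hgm ha hab y
  exact sub_nonneg.mp (integral_sub (hint a) (hint b) ▸ hD)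

theorem conv_even_antitone_general (q q' : ℝ≥0∞)
    (hconj : 1 / q + 1 / q' = 1) (f g : ℝ → ℝ)
    (hf : MemLp f q volume) (hg : MemLp g q' volume)
    (hf0 : ∀ x, 0 ≤ f x) (hg0 : ∀ x, 0 ≤ g x)
    (hfe : ∀ x, f (-x) = f x) (hge : ∀ x, g (-x) = g x)
    (hfm : AntitoneOn f (Set.Ici 0)) (hgm : AntitoneOn g (Set.Ici 0)) :
    (∀ x, 0 ≤ convR f g x) ∧ (∀ x, convR f g (-x) = convR f g x) ∧
      AntitoneOn (convR f g) (Set.Ici 0) ∧ ∀ x, convR f g x ≤ convR f g 0 := by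
  have : q.HolderConjugate q' := holderConjugate_iff.mpr (by simpa only [one_div] using hconj)
  have heven : (convR f g).Even := even_convR hfe hge
  have hanti := antitoneOn_convR (hf.integrable_mul_comp_sub hg) hfe hfm hge hgm
  exact ⟨fun x => integral_nonneg fun y => mul_nonneg (hf0 y) (hg0 _), heven, hanti,
    fun x => heven.apply_le_of_abs_le hanti (by simp)⟩

/-- If `f ∈ L^q`, `g ∈ L^{q'}` with `1/q + 1/q' = 1` are nonnegative, even and
nonincreasing on `[0,∞)`, then so is `f ∗ g`; in particular `f ∗ g` attains its
maximum at `0`. -/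
theorem conv_even_antitone (q q' : ℝ≥0∞) (hq : 1 ≤ q) (hq' : 1 ≤ q')
    (hconj : 1 / q + 1 / q' = 1) (f g : ℝ → ℝ)
    (hf : MemLp f q volume) (hg : MemLp g q' volume)
    (hf0 : ∀ x, 0 ≤ f x) (hg0 : ∀ x, 0 ≤ g x)
    (hfe : ∀ x, f (-x) = f x) (hge : ∀ x, g (-x) = g x)
    (hfm : AntitoneOn f (Set.Ici 0)) (hgm : AntitoneOn g (Set.Ici 0)) :
    (∀ x, 0 ≤ convR f g x) ∧ (∀ x, convR f g (-x) = convR f g x) ∧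
      AntitoneOn (convR f g) (Set.Ici 0) ∧ ∀ x, convR f g x ≤ convR f g 0 :=
  conv_even_antitone_general q q' hconj f g hf hg hf0 hg0 hfe hge hfm hgm
end

section
/- Let a₁, a₂ ∈ [0, 1/2) satisfy a₁ + a₂ > 1/2. Then there exists a constant C > 0 (depending on a₁, a₂) such that for all α, β ∈ ℝ: ∫_ℝ ⟨y−α⟩^{−2a₁} ⟨y−β⟩^{−2a₂} dy ≤ C ⟨α−β⟩^{1−2(a₁+a₂)}. -/
open MeasureTheory

open Set Real Filter Topology

/-- Japanese bracket `⟨x⟩ = 1 + |x|`. -/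
noncomputable def jb (x : ℝ) : ℝ := 1 + |x|



lemma one_le_jb (x : ℝ) : 1 ≤ jb x := by simp [jb, abs_nonneg]
lemma jb_pos (x : ℝ) : 0 < jb x := lt_of_lt_of_le one_pos (one_le_jb x)
lemma continuous_jb : Continuous jb := continuous_const.add continuous_abs

lemma jb_rpow_nonneg (x r : ℝ) : 0 ≤ jb x ^ r := Real.rpow_nonneg (jb_pos x).le r

lemma jb_rpow_le_one {r : ℝ} (hr : 0 ≤ r) (x : ℝ) : jb x ^ (-r) ≤ 1 :=
  Real.rpow_le_one_of_one_le_of_nonpos (one_le_jb x) (neg_nonpos.mpr hr)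

lemma continuous_jb_rpow (t p : ℝ) : Continuous (fun y : ℝ => jb (y - t) ^ (-p)) :=
  (continuous_jb.comp (continuous_id.sub continuous_const)).rpow_const
    (fun x => Or.inl (jb_pos _).ne')

lemma integrableOn_tail {r : ℝ} (hr : 1 < r) {b : ℝ} (hb : 0 ≤ b) :
    IntegrableOn (fun y : ℝ => (1 + y) ^ (-r)) (Ioi b) := by
  have h : Integrable (fun y : ℝ => (1 + ‖y‖) ^ (-r)) := by
    apply integrable_one_add_norm (E := ℝ)
    simpa using hr
  refine (h.integrableOn (s := Ioi b)).congr_fun (fun y hy => ?_) measurableSet_Ioi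
  dsimp only; rw [Real.norm_eq_abs, abs_of_nonneg (le_of_lt (lt_of_le_of_lt hb hy))]

lemma integral_Ioi_one_add_rpow {r : ℝ} (hr : 1 < r) {b : ℝ} (hb : 0 ≤ b) :
    ∫ y in Ioi b, (1 + y) ^ (-r) = (1 + b) ^ (1 - r) / (r - 1) := by
  have h1r : (1 : ℝ) - r ≠ 0 := by linarith
  have hderiv : ∀ x ∈ Ici b, HasDerivAt (fun y : ℝ => (1 + y) ^ (1 - r) / (1 - r))
      ((1 + x) ^ (-r)) x := by
    intro x hx
    have hx0 : (0:ℝ) < 1 + x := by have := hb.trans hx; linarith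
    have h := (((hasDerivAt_id x).const_add 1).rpow_const
      (p := 1 - r) (Or.inl hx0.ne')).div_const (1 - r)
    refine h.congr_deriv ?_
    rw [show 1 - r - 1 = -r by ring]
    field_simp
    rfl
  have htend : Tendsto (fun y : ℝ => (1 + y) ^ (1 - r) / (1 - r)) atTop (𝓝 (0 / (1 - r))) := by
    apply Tendsto.div_const
    have h2 : Tendsto (fun y : ℝ => 1 + y) atTop atTop := tendsto_atTop_add_const_left _ _ tendsto_id
    have h3 : Tendsto (fun x : ℝ => x ^ (-(r - 1))) atTop (𝓝 0) :=
      tendsto_rpow_neg_atTop (by linarith)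
    have := h3.comp h2
    rw [show -(r-1) = 1 - r by ring] at this; exact this
  rw [integral_Ioi_of_hasDerivAt_of_tendsto' hderiv (integrableOn_tail hr hb) htend]
  rw [zero_div, zero_sub, ← div_neg, neg_sub]


lemma jb_neg (x : ℝ) : jb (-x) = jb x := by simp [jb]


lemma integral_Iic_jb_rpow {r : ℝ} (hr : 1 < r) {b : ℝ} (hb : b ≤ 0) :
    ∫ y in Iic b, jb y ^ (-r) = (1 - b) ^ (1 - r) / (r - 1) := by
  have h := integral_comp_neg_Iic b (fun x => jb x ^ (-r))
  simp only [jb_neg] at h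
  rw [h]
  have e : ∫ x in Ioi (-b), jb x ^ (-r) = ∫ x in Ioi (-b), (1 + x) ^ (-r) := by
    refine setIntegral_congr_fun measurableSet_Ioi (fun x hx => ?_)
    have : 0 ≤ x := le_of_lt (lt_of_le_of_lt (by linarith) hx)
    simp [jb, abs_of_nonneg this]
  rw [e, integral_Ioi_one_add_rpow hr (by linarith)]
  norm_num [sub_eq_add_neg]

lemma integral_Ioc_jb_rpow {r : ℝ} (hr0 : 0 ≤ r) (hr1 : r < 1) {t : ℝ} (ht : 0 ≤ t) :
    ∫ y in Ioc (-t) t, jb y ^ (-r) ≤ 2 * (1 + t) ^ (1 - r) / (1 - r) := by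
  have hc : Continuous (fun y : ℝ => jb y ^ (-r)) := by
    simpa using continuous_jb_rpow 0 r
  have hle : -t ≤ t := by linarith
  rw [← intervalIntegral.integral_of_le hle]
  rw [← intervalIntegral.integral_add_adjacent_intervals
    (hc.intervalIntegrable (-t) 0) (hc.intervalIntegrable 0 t)]
  have e1 : (∫ y in (-t)..(0:ℝ), jb y ^ (-r)) = ∫ y in (0:ℝ)..t, jb y ^ (-r) := by
    have h := intervalIntegral.integral_comp_neg (a := 0) (b := t) (fun y => jb y ^ (-r))
    simp only [jb_neg, neg_zero] at h
    exact h.symm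
  have e2 : (∫ y in (0:ℝ)..t, jb y ^ (-r)) = ((1+t) ^ (1-r) - 1)/(1-r) := by
    have ec : (∫ y in (0:ℝ)..t, jb y ^ (-r)) = ∫ y in (0:ℝ)..t, (1 + y) ^ (-r) := by
      refine intervalIntegral.integral_congr (fun y hy => ?_)
      rw [uIcc_of_le ht] at hy
      simp [jb, abs_of_nonneg hy.1]
    rw [ec]
    rw [intervalIntegral.integral_comp_add_left (a := (0:ℝ)) (b := t)
      (f := fun x : ℝ => x ^ (-r)) 1]
    rw [integral_rpow (Or.inl (by linarith))]
    rw [show -r + 1 = 1 - r by ring]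
    norm_num
  rw [e1, e2]
  have h1r : (0:ℝ) < 1 - r := by linarith
  have hpow : (0:ℝ) ≤ (1+t)^(1-r) := rpow_nonneg (by linarith) _
  rw [← add_div]
  gcongr
  linarith


lemma two_rpow_pos (p : ℝ) : (0:ℝ) < 2 ^ p := Real.rpow_pos_of_pos two_pos p

lemma one_le_two_rpow {p : ℝ} (hp : 0 ≤ p) : (1:ℝ) ≤ 2 ^ p := by
  calc (1:ℝ) = 2 ^ (0:ℝ) := (Real.rpow_zero 2).symm
    _ ≤ 2 ^ p := Real.rpow_le_rpow_of_exponent_le one_le_two hp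

lemma half_rpow_neg {x p : ℝ} (hx : 0 ≤ x) : (x / 2) ^ (-p) = 2 ^ p * x ^ (-p) := by
  rw [Real.div_rpow hx (by norm_num), Real.rpow_neg (by norm_num : (0:ℝ) ≤ 2),
    div_eq_mul_inv, inv_inv, mul_comm]

/-- Pointwise bound on the far-left region. -/
lemma bound_left {p q t y : ℝ} (hp0 : 0 ≤ p) (ht : 0 ≤ t) (hy : y ≤ -t) :
    jb (y - t) ^ (-p) * jb y ^ (-q) ≤ jb y ^ (-(p + q)) := by
  have hy0 : y ≤ 0 := le_trans hy (by linarith)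
  have hj : jb y ≤ jb (y - t) := by
    simp only [jb]
    rw [abs_of_nonpos hy0, abs_of_nonpos (by linarith : y - t ≤ 0)]
    linarith
  calc jb (y - t) ^ (-p) * jb y ^ (-q) ≤ jb y ^ (-p) * jb y ^ (-q) :=
        mul_le_mul_of_nonneg_right
          (Real.rpow_le_rpow_of_nonpos (jb_pos y) hj (neg_nonpos.mpr hp0))
          (jb_rpow_nonneg _ _)
    _ = jb y ^ (-(p + q)) := by rw [← Real.rpow_add (jb_pos y)]; ring_nf

/-- Pointwise bound on the far-right region. -/
lemma bound_right {p q t y : ℝ} (hp0 : 0 ≤ p) (ht : 0 ≤ t) (hy : 2 * t ≤ y) :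
    jb (y - t) ^ (-p) * jb y ^ (-q) ≤ 2 ^ p * (1 + y) ^ (-(p + q)) := by
  have hy0 : 0 ≤ y := le_trans (by linarith) hy
  have hyt : 0 ≤ y - t := by linarith
  have h1y : (0:ℝ) < 1 + y := by linarith
  have hj : (1 + y) / 2 ≤ jb (y - t) := by
    simp only [jb]
    rw [abs_of_nonneg hyt]
    linarith
  have h1 : jb (y - t) ^ (-p) ≤ ((1 + y) / 2) ^ (-p) :=
    Real.rpow_le_rpow_of_nonpos (by linarith) hj (neg_nonpos.mpr hp0)
  have hjy : jb y = 1 + y := by simp [jb, abs_of_nonneg hy0]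
  calc jb (y - t) ^ (-p) * jb y ^ (-q)
      ≤ ((1 + y) / 2) ^ (-p) * (1 + y) ^ (-q) := by
        rw [hjy]
        exact mul_le_mul_of_nonneg_right h1 (Real.rpow_nonneg h1y.le _)
    _ = 2 ^ p * ((1 + y) ^ (-p) * (1 + y) ^ (-q)) := by
        rw [half_rpow_neg h1y.le]; ring
    _ = 2 ^ p * (1 + y) ^ (-(p + q)) := by
        rw [← Real.rpow_add h1y]; ring_nf

lemma f_integrable {p q t : ℝ} (hp0 : 0 ≤ p) (hq0 : 0 ≤ q) (hs : 1 < p + q) (ht : 0 ≤ t) :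
    Integrable (fun y : ℝ => jb (y - t) ^ (-p) * jb y ^ (-q)) := by
  have hmeas : AEStronglyMeasurable (fun y : ℝ => jb (y - t) ^ (-p) * jb y ^ (-q)) volume :=
    ((continuous_jb_rpow t p).mul (by simpa using continuous_jb_rpow 0 q)).aestronglyMeasurable
  have hgint : Integrable (fun y : ℝ =>
      2 ^ p * (1 + ‖y‖) ^ (-(p + q)) + (Ioo (-t) (2*t)).indicator (fun _ => 1) y) := by
    refine Integrable.add ?_ ?_
    · exact (integrable_one_add_norm (by simpa using hs)).const_mul _
    · exact (integrableOn_const (C := (1:ℝ)) measure_Ioo_lt_top.ne).integrable_indicator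
        measurableSet_Ioo
  refine hgint.mono' hmeas (Filter.Eventually.of_forall fun y => ?_)
  have hf0 : 0 ≤ jb (y - t) ^ (-p) * jb y ^ (-q) :=
    mul_nonneg (jb_rpow_nonneg _ _) (jb_rpow_nonneg _ _)
  rw [Real.norm_eq_abs, abs_of_nonneg hf0]
  have hind : 0 ≤ (Ioo (-t) (2*t)).indicator (fun _ => (1:ℝ)) y :=
    indicator_nonneg (fun _ _ => zero_le_one) y
  have hterm : (0:ℝ) ≤ 2 ^ p * (1 + ‖y‖) ^ (-(p + q)) :=
    mul_nonneg (two_rpow_pos p).le (Real.rpow_nonneg (by positivity) _)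
  by_cases hy : y ∈ Ioo (-t) (2*t)
  · rw [indicator_of_mem hy]
    have h1 := mul_le_one₀ (jb_rpow_le_one hp0 (y - t)) (jb_rpow_nonneg _ _)
      (jb_rpow_le_one hq0 y)
    linarith
  · rw [indicator_of_notMem hy, add_zero]
    rw [mem_Ioo, not_and_or, not_lt, not_lt] at hy
    have hnorm : (1 + ‖y‖ : ℝ) = jb y := by rw [Real.norm_eq_abs]; rfl
    rcases hy with h | h
    · calc jb (y - t) ^ (-p) * jb y ^ (-q) ≤ jb y ^ (-(p+q)) := bound_left hp0 ht h
        _ ≤ 2 ^ p * (1 + ‖y‖) ^ (-(p+q)) := by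
            rw [hnorm]
            exact le_mul_of_one_le_left (jb_rpow_nonneg _ _) (one_le_two_rpow hp0)
    · have := bound_right (q := q) hp0 ht h
      have hy0 : 0 ≤ y := le_trans (by linarith) h
      rw [hnorm]
      calc jb (y - t) ^ (-p) * jb y ^ (-q) ≤ 2 ^ p * (1 + y) ^ (-(p+q)) := this
        _ = 2 ^ p * jb y ^ (-(p+q)) := by rw [show jb y = 1 + y by simp [jb, abs_of_nonneg hy0]]


lemma main_estimate {p q : ℝ} (hp0 : 0 ≤ p) (hp1 : p < 1) (hq0 : 0 ≤ q) (hq1 : q < 1)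
    (hs : 1 < p + q) {t : ℝ} (ht : 0 ≤ t) :
    (∫ y : ℝ, jb (y - t) ^ (-p) * jb y ^ (-q))
      ≤ ((1 + 2 ^ p) / (p + q - 1) + 2 ^ (p + 1) / (1 - q) + 2 ^ (q + 1) / (1 - p))
        * (1 + t) ^ (1 - (p + q)) := by
  have hint : Integrable (fun y : ℝ => jb (y - t) ^ (-p) * jb y ^ (-q)) :=
    f_integrable hp0 hq0 hs ht
  have h1t : (0:ℝ) < 1 + t := by linarith
  have hT : (0:ℝ) ≤ (1 + t) ^ (1 - (p + q)) := Real.rpow_nonneg h1t.le _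
  have hhalf : (0:ℝ) < (1 + t) / 2 := by linarith
  -- splitting
  have hsplit1 : (∫ y : ℝ, jb (y - t) ^ (-p) * jb y ^ (-q))
      = (∫ y in Iic (-t), jb (y - t) ^ (-p) * jb y ^ (-q))
        + ∫ y in Ioi (-t), jb (y - t) ^ (-p) * jb y ^ (-q) :=
    (intervalIntegral.integral_Iic_add_Ioi hint.integrableOn hint.integrableOn).symm
  have hsplit2 : (∫ y in Ioi (-t), jb (y - t) ^ (-p) * jb y ^ (-q))
      = (∫ y in Ioc (-t) (t/2), jb (y - t) ^ (-p) * jb y ^ (-q))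
        + ∫ y in Ioi (t/2), jb (y - t) ^ (-p) * jb y ^ (-q) := by
    rw [← Ioc_union_Ioi_eq_Ioi (by linarith : -t ≤ t/2),
      setIntegral_union Ioc_disjoint_Ioi_same measurableSet_Ioi
        hint.integrableOn hint.integrableOn]
  have hsplit3 : (∫ y in Ioi (t/2), jb (y - t) ^ (-p) * jb y ^ (-q))
      = (∫ y in Ioc (t/2) (2*t), jb (y - t) ^ (-p) * jb y ^ (-q))
        + ∫ y in Ioi (2*t), jb (y - t) ^ (-p) * jb y ^ (-q) := by
    rw [← Ioc_union_Ioi_eq_Ioi (by linarith : t/2 ≤ 2*t),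
      setIntegral_union Ioc_disjoint_Ioi_same measurableSet_Ioi
        hint.integrableOn hint.integrableOn]
  -- Piece 1
  have hb1 : (∫ y in Iic (-t), jb (y - t) ^ (-p) * jb y ^ (-q))
      ≤ (1 + t) ^ (1 - (p + q)) / (p + q - 1) := by
    have hIOn : IntegrableOn (fun y : ℝ => jb y ^ (-(p+q))) (Iic (-t)) := by
      have h : Integrable (fun y : ℝ => (1 + ‖y‖) ^ (-(p+q))) :=
        integrable_one_add_norm (by simpa using hs)
      have he : (fun y : ℝ => jb y ^ (-(p+q))) = fun y : ℝ => (1 + ‖y‖) ^ (-(p+q)) := by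
        funext y; rw [Real.norm_eq_abs]; rfl
      rw [he]; exact h.integrableOn
    calc (∫ y in Iic (-t), jb (y - t) ^ (-p) * jb y ^ (-q))
        ≤ ∫ y in Iic (-t), jb y ^ (-(p+q)) :=
          setIntegral_mono_on hint.integrableOn hIOn measurableSet_Iic
            (fun y hy => bound_left hp0 ht hy)
      _ = (1 - (-t)) ^ (1 - (p+q)) / (p + q - 1) := integral_Iic_jb_rpow hs (by linarith)
      _ = (1 + t) ^ (1 - (p+q)) / (p + q - 1) := by rw [sub_neg_eq_add]
  -- Piece 2
  have hb2 : (∫ y in Ioc (-t) (t/2), jb (y - t) ^ (-p) * jb y ^ (-q))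
      ≤ 2 ^ (p+1) / (1 - q) * (1 + t) ^ (1 - (p + q)) := by
    have hcq : Continuous (fun y : ℝ => jb y ^ (-q)) := by
      simpa using continuous_jb_rpow 0 q
    have hkey : ∀ y ∈ Ioc (-t) (t/2),
        jb (y - t) ^ (-p) * jb y ^ (-q) ≤ ((1+t)/2) ^ (-p) * jb y ^ (-q) := by
      intro y hy
      have hyt : y - t ≤ 0 := by have := hy.2; linarith
      have h1 : (1+t)/2 ≤ jb (y - t) := by
        simp only [jb]
        rw [abs_of_nonpos hyt]
        have := hy.2; linarith
      exact mul_le_mul_of_nonneg_right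
        (Real.rpow_le_rpow_of_nonpos hhalf h1 (neg_nonpos.mpr hp0)) (jb_rpow_nonneg _ _)
    calc (∫ y in Ioc (-t) (t/2), jb (y - t) ^ (-p) * jb y ^ (-q))
        ≤ ∫ y in Ioc (-t) (t/2), ((1+t)/2) ^ (-p) * jb y ^ (-q) :=
          setIntegral_mono_on hint.integrableOn
            ((continuous_const.mul hcq).integrableOn_Ioc) measurableSet_Ioc hkey
      _ = ((1+t)/2) ^ (-p) * ∫ y in Ioc (-t) (t/2), jb y ^ (-q) := integral_const_mul _ _
      _ ≤ ((1+t)/2) ^ (-p) * ∫ y in Ioc (-t) t, jb y ^ (-q) := by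
          refine mul_le_mul_of_nonneg_left ?_ (Real.rpow_nonneg hhalf.le _)
          refine setIntegral_mono_set hcq.integrableOn_Ioc
            (Filter.Eventually.of_forall fun y => jb_rpow_nonneg _ _) ?_
          exact HasSubset.Subset.eventuallyLE (Ioc_subset_Ioc_right (by linarith))
      _ ≤ ((1+t)/2) ^ (-p) * (2 * (1 + t) ^ (1 - q) / (1 - q)) :=
          mul_le_mul_of_nonneg_left (integral_Ioc_jb_rpow hq0 hq1 ht)
            (Real.rpow_nonneg hhalf.le _)
      _ = 2 ^ (p+1) / (1 - q) * (1 + t) ^ (1 - (p + q)) := by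
          rw [half_rpow_neg h1t.le,
            show (2:ℝ) ^ (p+1) = 2 ^ p * 2 by
              rw [Real.rpow_add (by norm_num : (0:ℝ) < 2), Real.rpow_one],
            show (1+t:ℝ) ^ (1 - (p+q)) = (1+t) ^ (-p) * (1+t) ^ (1-q) by
              rw [← Real.rpow_add h1t]; ring_nf]
          ring
  -- Piece 3
  have hb3 : (∫ y in Ioc (t/2) (2*t), jb (y - t) ^ (-p) * jb y ^ (-q))
      ≤ 2 ^ (q+1) / (1 - p) * (1 + t) ^ (1 - (p + q)) := by
    have hcp : Continuous (fun y : ℝ => jb (y - t) ^ (-p)) := continuous_jb_rpow t p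
    have hcp0 : Continuous (fun y : ℝ => jb y ^ (-p)) := by
      simpa using continuous_jb_rpow 0 p
    have hkey : ∀ y ∈ Ioc (t/2) (2*t),
        jb (y - t) ^ (-p) * jb y ^ (-q) ≤ jb (y - t) ^ (-p) * ((1+t)/2) ^ (-q) := by
      intro y hy
      have hy0 : 0 ≤ y := le_trans (by linarith) hy.1.le
      have h1 : (1+t)/2 ≤ jb y := by
        simp only [jb]
        rw [abs_of_nonneg hy0]
        have := hy.1; linarith
      exact mul_le_mul_of_nonneg_left
        (Real.rpow_le_rpow_of_nonpos hhalf h1 (neg_nonpos.mpr hq0)) (jb_rpow_nonneg _ _)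
    have hsub : (∫ y in Ioc (t/2) (2*t), jb (y - t) ^ (-p))
        = ∫ u in Ioc (-(t/2)) t, jb u ^ (-p) := by
      rw [← intervalIntegral.integral_of_le (by linarith : t/2 ≤ 2*t),
        intervalIntegral.integral_comp_sub_right (fun u => jb u ^ (-p)) t,
        show t/2 - t = -(t/2) by ring, show 2*t - t = t by ring,
        intervalIntegral.integral_of_le (by linarith : -(t/2) ≤ t)]
    calc (∫ y in Ioc (t/2) (2*t), jb (y - t) ^ (-p) * jb y ^ (-q))
        ≤ ∫ y in Ioc (t/2) (2*t), jb (y - t) ^ (-p) * ((1+t)/2) ^ (-q) :=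
          setIntegral_mono_on hint.integrableOn
            ((hcp.mul continuous_const).integrableOn_Ioc) measurableSet_Ioc hkey
      _ = (∫ y in Ioc (t/2) (2*t), jb (y - t) ^ (-p)) * ((1+t)/2) ^ (-q) :=
          integral_mul_const _ _
      _ = (∫ u in Ioc (-(t/2)) t, jb u ^ (-p)) * ((1+t)/2) ^ (-q) := by rw [hsub]
      _ ≤ (∫ u in Ioc (-t) t, jb u ^ (-p)) * ((1+t)/2) ^ (-q) := by
          refine mul_le_mul_of_nonneg_right ?_ (Real.rpow_nonneg hhalf.le _)
          refine setIntegral_mono_set hcp0.integrableOn_Ioc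
            (Filter.Eventually.of_forall fun y => jb_rpow_nonneg _ _) ?_
          exact HasSubset.Subset.eventuallyLE (Ioc_subset_Ioc_left (by linarith))
      _ ≤ (2 * (1 + t) ^ (1 - p) / (1 - p)) * ((1+t)/2) ^ (-q) :=
          mul_le_mul_of_nonneg_right (integral_Ioc_jb_rpow hp0 hp1 ht)
            (Real.rpow_nonneg hhalf.le _)
      _ = 2 ^ (q+1) / (1 - p) * (1 + t) ^ (1 - (p + q)) := by
          rw [half_rpow_neg h1t.le,
            show (2:ℝ) ^ (q+1) = 2 ^ q * 2 by
              rw [Real.rpow_add (by norm_num : (0:ℝ) < 2), Real.rpow_one],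
            show (1+t:ℝ) ^ (1 - (p+q)) = (1+t) ^ (-q) * (1+t) ^ (1-p) by
              rw [← Real.rpow_add h1t]; ring_nf]
          ring
  -- Piece 4
  have hb4 : (∫ y in Ioi (2*t), jb (y - t) ^ (-p) * jb y ^ (-q))
      ≤ 2 ^ p * (1 + t) ^ (1 - (p + q)) / (p + q - 1) := by
    calc (∫ y in Ioi (2*t), jb (y - t) ^ (-p) * jb y ^ (-q))
        ≤ ∫ y in Ioi (2*t), 2 ^ p * (1 + y) ^ (-(p+q)) :=
          setIntegral_mono_on hint.integrableOn
            ((integrableOn_tail hs (by linarith)).const_mul _) measurableSet_Ioi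
            (fun y hy => bound_right hp0 ht hy.le)
      _ = 2 ^ p * ((1 + 2*t) ^ (1 - (p+q)) / (p + q - 1)) := by
          rw [integral_const_mul, integral_Ioi_one_add_rpow hs (by linarith)]
      _ ≤ 2 ^ p * ((1 + t) ^ (1 - (p+q)) / (p + q - 1)) := by
          refine mul_le_mul_of_nonneg_left ?_ (two_rpow_pos p).le
          refine div_le_div_of_nonneg_right ?_ (by linarith)
          exact Real.rpow_le_rpow_of_nonpos h1t (by linarith) (by linarith)
      _ = 2 ^ p * (1 + t) ^ (1 - (p+q)) / (p + q - 1) := by ring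
  rw [hsplit1, hsplit2, hsplit3]
  have hfinal : (1 + t) ^ (1 - (p+q)) / (p + q - 1)
      + 2 ^ (p+1) / (1 - q) * (1 + t) ^ (1 - (p + q))
      + 2 ^ (q+1) / (1 - p) * (1 + t) ^ (1 - (p + q))
      + 2 ^ p * (1 + t) ^ (1 - (p+q)) / (p + q - 1)
      = ((1 + 2 ^ p) / (p + q - 1) + 2 ^ (p + 1) / (1 - q) + 2 ^ (q + 1) / (1 - p))
        * (1 + t) ^ (1 - (p + q)) := by ring
  linarith



/-- For `a₁, a₂ ∈ [0,1/2)` with `a₁ + a₂ > 1/2`,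
`∫ ⟨y−α⟩^{−2a₁} ⟨y−β⟩^{−2a₂} dy ≲ ⟨α−β⟩^{1−2(a₁+a₂)}`. -/
theorem convolution_weight_estimate (a₁ a₂ : ℝ)
    (h₁ : a₁ ∈ Set.Ico (0 : ℝ) (1/2)) (h₂ : a₂ ∈ Set.Ico (0 : ℝ) (1/2))
    (hsum : 1/2 < a₁ + a₂) :
    ∃ C : ℝ, 0 < C ∧ ∀ α β : ℝ,
      (∫ y : ℝ, jb (y - α) ^ (-(2 * a₁)) * jb (y - β) ^ (-(2 * a₂)))
        ≤ C * jb (α - β) ^ (1 - 2 * (a₁ + a₂)) := by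
  obtain ⟨ha1l, ha1r⟩ := h₁
  obtain ⟨ha2l, ha2r⟩ := h₂
  set p := 2 * a₁ with hp
  set q := 2 * a₂ with hq
  have hp0 : 0 ≤ p := by linarith
  have hp1 : p < 1 := by rw [hp]; linarith
  have hq0 : 0 ≤ q := by linarith
  have hq1 : q < 1 := by rw [hq]; linarith
  have hs : 1 < p + q := by rw [hp, hq]; linarith
  have hexp : 1 - 2 * (a₁ + a₂) = 1 - (p + q) := by rw [hp, hq]; ring
  set C₁ : ℝ := (1 + 2 ^ p) / (p + q - 1) + 2 ^ (p + 1) / (1 - q) + 2 ^ (q + 1) / (1 - p)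
    with hC₁
  set C₂ : ℝ := (1 + 2 ^ q) / (q + p - 1) + 2 ^ (q + 1) / (1 - p) + 2 ^ (p + 1) / (1 - q)
    with hC₂
  have hC₁pos : 0 < C₁ := by
    have := two_rpow_pos p; have := two_rpow_pos q
    have := two_rpow_pos (p+1); have := two_rpow_pos (q+1)
    apply add_pos (add_pos (div_pos (by linarith) (by linarith))
      (div_pos (by linarith) (by linarith))) (div_pos (by linarith) (by linarith))
  have hC₂pos : 0 < C₂ := by
    have := two_rpow_pos p; have := two_rpow_pos q
    have := two_rpow_pos (p+1); have := two_rpow_pos (q+1)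
    apply add_pos (add_pos (div_pos (by linarith) (by linarith))
      (div_pos (by linarith) (by linarith))) (div_pos (by linarith) (by linarith))
  refine ⟨C₁ + C₂, by linarith, fun α β => ?_⟩
  rcases le_total β α with hab | hab
  · -- t = α - β ≥ 0
    have ht : 0 ≤ α - β := by linarith
    have htrans : (∫ y : ℝ, jb (y - α) ^ (-p) * jb (y - β) ^ (-q))
        = ∫ y : ℝ, jb (y - (α - β)) ^ (-p) * jb y ^ (-q) := by
      have h := integral_sub_right_eq_self (μ := volume)
        (fun y : ℝ => jb (y - (α - β)) ^ (-p) * jb y ^ (-q)) β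
      rw [← h]
      congr 1; funext y; rw [show y - β - (α - β) = y - α by ring]
    rw [htrans, hexp]
    have hj : jb (α - β) = 1 + (α - β) := by simp [jb, abs_of_nonneg ht]
    have hpow : (0:ℝ) ≤ (1 + (α - β)) ^ (1 - (p + q)) :=
      Real.rpow_nonneg (by linarith) _
    calc (∫ y : ℝ, jb (y - (α - β)) ^ (-p) * jb y ^ (-q))
        ≤ C₁ * (1 + (α - β)) ^ (1 - (p + q)) := main_estimate hp0 hp1 hq0 hq1 hs ht
      _ ≤ (C₁ + C₂) * (1 + (α - β)) ^ (1 - (p + q)) := by nlinarith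
      _ = (C₁ + C₂) * jb (α - β) ^ (1 - (p + q)) := by rw [hj]
  · -- t = β - α ≥ 0, swap roles
    have ht : 0 ≤ β - α := by linarith
    have hcomm : (∫ y : ℝ, jb (y - α) ^ (-p) * jb (y - β) ^ (-q))
        = ∫ y : ℝ, jb (y - β) ^ (-q) * jb (y - α) ^ (-p) := by
      congr 1; funext y; ring
    have htrans : (∫ y : ℝ, jb (y - β) ^ (-q) * jb (y - α) ^ (-p))
        = ∫ y : ℝ, jb (y - (β - α)) ^ (-q) * jb y ^ (-p) := by
      have h := integral_sub_right_eq_self (μ := volume)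
        (fun y : ℝ => jb (y - (β - α)) ^ (-q) * jb y ^ (-p)) α
      rw [← h]
      congr 1; funext y; rw [show y - α - (β - α) = y - β by ring]
    rw [hcomm, htrans, hexp]
    have hj : jb (α - β) = 1 + (β - α) := by
      simp only [jb]
      rw [abs_sub_comm, abs_of_nonneg ht]
    have hpow : (0:ℝ) ≤ (1 + (β - α)) ^ (1 - (q + p)) :=
      Real.rpow_nonneg (by linarith) _
    have hqp : 1 - (p + q) = 1 - (q + p) := by ring
    calc (∫ y : ℝ, jb (y - (β - α)) ^ (-q) * jb y ^ (-p))
        ≤ C₂ * (1 + (β - α)) ^ (1 - (q + p)) :=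
          main_estimate hq0 hq1 hp0 hp1 (by linarith) ht
      _ ≤ (C₁ + C₂) * (1 + (β - α)) ^ (1 - (q + p)) := by nlinarith
      _ = (C₁ + C₂) * jb (α - β) ^ (1 - (p + q)) := by rw [hj, hqp]
end

section
/- Let γ ∈ ℝ with γ ≠ 0 and |γ| < 1, and define Q_γ(n,m) := (n−m)² + γ|m|m − n² for integers n, m. Then there exists a sequence {N_j}_{j∈ℕ} of positive integers with N_j → ∞ such that |Q_γ(N_j, N_j⁰)| ≤ 1 for every j, where N_j⁰ denotes the integer closest to 2N_j/(1+γ). -/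
open Filter

/-- The resonance function `Q_γ(n,m) = (n−m)² + γ|m|m − n²`. -/
noncomputable def Qγ (γ : ℝ) (n m : ℤ) : ℝ :=
  ((n : ℝ) - (m : ℝ)) ^ 2 + γ * |(m : ℝ)| * (m : ℝ) - (n : ℝ) ^ 2

lemma round_eq_of_abs_lt {x : ℝ} {B : ℤ} (h : |x - B| < 1/2) : round x = B := by
  rw [round_eq]
  apply Int.floor_eq_iff.mpr
  rw [abs_lt] at h
  constructor
  · push_cast; linarith [h.1, h.2]
  · push_cast; linarith [h.1, h.2]



lemma irr_ne_div {β : ℝ} (hβ : Irrational β) (a b : ℤ) :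
    β ≠ (a : ℝ) / (b : ℝ) := by
  intro h
  refine hβ ⟨(a : ℚ) / (b : ℚ), ?_⟩
  push_cast
  exact h.symm

lemma sternBrocot {β : ℝ} (hβ : Irrational β) (h0 : 0 < β) (h1 : β < 1) (k : ℕ) :
    ∃ a b c d : ℤ, 0 < b ∧ 0 < d ∧ b * c - a * d = 1 ∧
      (a : ℝ) / b < β ∧ β < (c : ℝ) / d ∧ (k : ℤ) + 2 ≤ b + d := by
  induction k with
  | zero =>
    exact ⟨0, 1, 1, 1, one_pos, one_pos, by ring, by simpa using h0, by simpa using h1,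
      by norm_num⟩
  | succ k ih =>
    obtain ⟨a, b, c, d, hb, hd, hdet, hl, hr, hsum⟩ := ih
    have hmed := irr_ne_div hβ (a + c) (b + d)
    rcases lt_or_gt_of_ne hmed with h | h
    · refine ⟨a, b, a + c, b + d, hb, by omega, by linear_combination hdet, hl, ?_, ?_⟩
      · convert h using 2 <;> push_cast <;> ring
      · push_cast; omega
    · refine ⟨a + c, b + d, c, d, by omega, hd, by linear_combination hdet, ?_, hr, ?_⟩
      · have := h
        convert this using 2 <;> push_cast <;> ring
      · push_cast; omega

lemma eps_bound {β : ℝ} (hβ : Irrational β) (C : ℕ) (hC : 0 < C) :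
    ∃ ε > 0, ∀ A B : ℤ, 0 < B → B ≤ (C : ℤ) → ε ≤ |β - (A : ℝ) / B| := by
  have hne : (Finset.Icc (1 : ℤ) C).Nonempty := ⟨1, by simp; exact_mod_cast hC⟩
  set f : ℤ → ℝ := fun b => |β - (round ((b : ℝ) * β) : ℝ) / (b : ℝ)| with hf
  refine ⟨(Finset.Icc (1 : ℤ) C).inf' hne f, ?_, ?_⟩
  · rw [gt_iff_lt, Finset.lt_inf'_iff]
    intro b _
    have : β ≠ (round ((b : ℝ) * β) : ℝ) / (b : ℝ) := irr_ne_div hβ _ _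
    simpa [hf, sub_eq_zero, abs_pos] using this
  · intro A B hB hBC
    have hmem : B ∈ Finset.Icc (1 : ℤ) (C : ℤ) := Finset.mem_Icc.mpr ⟨hB, hBC⟩
    refine le_trans (Finset.inf'_le f hmem) ?_
    have hB0 : (0 : ℝ) < (B : ℝ) := by exact_mod_cast hB
    have key : ∀ r : ℤ, |β - (r : ℝ) / (B : ℝ)| = |(B : ℝ) * β - r| / (B : ℝ) := by
      intro r
      have h1 : β - (r : ℝ) / B = ((B : ℝ) * β - r) / B := by field_simp
      rw [h1, abs_div, abs_of_pos hB0]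
    rw [hf]
    dsimp only
    rw [key, key]
    exact (div_le_div_iff_of_pos_right hB0).mpr (round_le ((B : ℝ) * β) A)

lemma vahlen {β : ℝ} (hβ : Irrational β) (h0 : 0 < β) (h1 : β < 1) (C : ℕ) (hC : 0 < C) :
    ∃ A B : ℤ, (C : ℤ) < B ∧ |(B : ℝ) * β - A| ≤ 1 / (2 * B) := by
  obtain ⟨ε, hε, hbound⟩ := eps_bound hβ C hC
  obtain ⟨k, hk⟩ := exists_nat_one_div_lt hε
  obtain ⟨a, b, c, d, hb, hd, hdet, hl, hr, hsum⟩ := sternBrocot hβ h0 h1 k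
  have hbR : (0 : ℝ) < (b : ℝ) := by exact_mod_cast hb
  have hdR : (0 : ℝ) < (d : ℝ) := by exact_mod_cast hd
  have hdetR : (b : ℝ) * c - a * d = 1 := by exact_mod_cast hdet
  have hbdZ : (k : ℤ) + 1 ≤ b * d := by nlinarith [hb, hd, hsum]
  have hbd : (k : ℝ) + 1 ≤ (b : ℝ) * d := by exact_mod_cast hbdZ
  have hgap : (c : ℝ) / d - (a : ℝ) / b = 1 / ((b : ℝ) * d) := by
    field_simp
    linear_combination hdetR
  have hx : 0 < β - (a : ℝ) / b := sub_pos.mpr hl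
  have hy : 0 < (c : ℝ) / d - β := sub_pos.mpr hr
  have hAM : 1 / ((b : ℝ) * d) ≤ 1 / (2 * (b : ℝ) ^ 2) + 1 / (2 * (d : ℝ) ^ 2) := by
    rw [div_add_div _ _ (by positivity) (by positivity),
      div_le_div_iff₀ (by positivity) (by positivity)]
    nlinarith [sq_nonneg ((b : ℝ) - d), sq_nonneg ((b : ℝ) * d)]
  have hsmall : 1 / ((b : ℝ) * d) ≤ 1 / ((k : ℝ) + 1) :=
    one_div_le_one_div_of_le (by positivity) hbd
  by_cases hcase : β - (a : ℝ) / b ≤ 1 / (2 * (b : ℝ) ^ 2)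
  · refine ⟨a, b, ?_, ?_⟩
    · by_contra hle
      push_neg at hle
      have h2 := hbound a b hb hle
      rw [abs_of_pos hx] at h2
      linarith
    · have h1 : (b : ℝ) * β - a = b * (β - (a : ℝ) / b) := by field_simp; try ring
      rw [h1, abs_of_pos (mul_pos hbR hx)]
      calc (b : ℝ) * (β - (a : ℝ) / b) ≤ b * (1 / (2 * (b : ℝ) ^ 2)) := by
            exact mul_le_mul_of_nonneg_left hcase hbR.le
        _ = 1 / (2 * b) := by field_simp
  · push_neg at hcase
    have hy2 : (c : ℝ) / d - β ≤ 1 / (2 * (d : ℝ) ^ 2) := by linarith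
    refine ⟨c, d, ?_, ?_⟩
    · by_contra hle
      push_neg at hle
      have h2 := hbound c d hd hle
      rw [abs_sub_comm, abs_of_pos hy] at h2
      linarith
    · have h1 : (d : ℝ) * β - c = -(d * ((c : ℝ) / d - β)) := by field_simp; try ring
      rw [h1, abs_neg, abs_of_pos (mul_pos hdR hy)]
      calc (d : ℝ) * ((c : ℝ) / d - β) ≤ d * (1 / (2 * (d : ℝ) ^ 2)) := by
            exact mul_le_mul_of_nonneg_left hy2 hdR.le
        _ = 1 / (2 * d) := by field_simp

/-- For `γ ≠ 0`, `|γ| < 1`, there is a sequence of positive integers `N_j → ∞` with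
`|Q_γ(N_j, N_j⁰)| ≤ 1`, where `N_j⁰` is the integer closest to `2N_j/(1+γ)`. -/
theorem dirichlet_resonance (γ : ℝ) (hγ0 : γ ≠ 0) (hγ1 : |γ| < 1) :
    ∃ N : ℕ → ℕ, (∀ j, 0 < N j) ∧ Tendsto N atTop atTop ∧
      ∀ j, |Qγ γ (N j : ℤ) (round (2 * (N j : ℝ) / (1 + γ)))| ≤ 1 := by
  obtain ⟨hγl, hγr⟩ := abs_lt.mp hγ1
  set β : ℝ := (1 + γ) / 2 with hβdef
  have hβ0 : 0 < β := by rw [hβdef]; linarith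
  have hβ1 : β < 1 := by rw [hβdef]; linarith
  have h2β : ∀ x : ℝ, 2 * x / (1 + γ) = x / β := by
    intro x; rw [hβdef, div_div_eq_mul_div]; ring
  have hQ : ∀ n m : ℤ, (0:ℝ) ≤ (m:ℝ) → Qγ γ n m = 2 * (m:ℝ) * ((m:ℝ) * β - n) := by
    intro n m hm
    rw [Qγ, abs_of_nonneg hm, hβdef]; ring
  by_cases hrat : ∃ r : ℚ, (r : ℝ) = β
  · obtain ⟨r, hr⟩ := hrat
    have hr0 : (0:ℚ) < r := by
      have : (0:ℝ) < (r:ℝ) := hr ▸ hβ0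
      exact_mod_cast this
    have hnum : 0 < r.num := Rat.num_pos.mpr hr0
    set p : ℕ := r.num.toNat with hp
    have hpz : (p : ℤ) = r.num := Int.toNat_of_nonneg hnum.le
    have hpR : (p : ℝ) = (r.num : ℝ) := by exact_mod_cast hpz
    have htn : 1 ≤ p := by omega
    have hdenQ : ((r.den : ℚ)) * r = (r.num : ℚ) := by field_simp; exact Rat.den_mul_eq_num r
    have hdenR : ((r.den : ℝ)) * β = (r.num : ℝ) := by
      rw [← hr]; exact_mod_cast hdenQ
    refine ⟨fun j => (j+1) * p, fun j => by positivity, ?_, fun j => ?_⟩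
    · apply tendsto_atTop_mono (fun j => ?_) tendsto_id
      show j ≤ (j+1) * p
      calc j ≤ (j+1) * 1 := by omega
        _ ≤ (j+1) * p := Nat.mul_le_mul_left _ htn
    · have hncast : (((j+1) * p : ℕ) : ℝ) = ((j:ℝ)+1) * (r.num : ℝ) := by
        push_cast [hpR]; ring
      set m : ℤ := ((j:ℤ)+1) * (r.den : ℤ) with hm
      have hmcast : (m : ℝ) = ((j:ℝ)+1) * (r.den : ℝ) := by rw [hm]; push_cast; ring
      have hx : 2 * (((j+1) * p : ℕ) : ℝ) / (1 + γ) = (m : ℝ) := by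
        rw [h2β, hncast, hmcast, div_eq_iff hβ0.ne']
        linear_combination (-((j:ℝ)+1)) * hdenR
      rw [hx, round_intCast, hQ]
      · have h1 : (m : ℝ) * β - ((((j+1) * p : ℕ) : ℤ) : ℝ) = 0 := by
          rw [hmcast]
          push_cast [hpR]
          linear_combination ((j:ℝ)+1) * hdenR
        rw [h1]
        norm_num
      · rw [hmcast]; positivity
  · have hβirr : Irrational β := hrat
    choose A B hCB hAB using fun j : ℕ => vahlen hβirr hβ0 hβ1 (j + ⌈β⁻¹⌉₊ + 1) (by omega)
    have hBpos : ∀ j, 0 < B j := fun j => lt_of_le_of_lt (by positivity) (hCB j)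
    have hBposR : ∀ j, (0:ℝ) < (B j : ℝ) := fun j => by exact_mod_cast hBpos j
    have hB1R : ∀ j, (1:ℝ) ≤ (B j : ℝ) := fun j => by exact_mod_cast hBpos j
    have hBj : ∀ j : ℕ, (j:ℝ) + 1 ≤ (B j : ℝ) := by
      intro j
      have h := hCB j
      have : (j:ℤ) + 1 ≤ B j := by push_cast at h ⊢; omega
      exact_mod_cast this
    have hBβ : ∀ j : ℕ, 1 < (B j : ℝ) * β := by
      intro j
      have h := hCB j
      have h1 : ((⌈β⁻¹⌉₊ : ℤ)) + 1 ≤ B j := by push_cast at h ⊢; omega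
      have h2 : β⁻¹ < (B j : ℝ) := by
        have h3 := Nat.le_ceil β⁻¹
        have h1R : ((⌈β⁻¹⌉₊ : ℝ)) + 1 ≤ (B j : ℝ) := by exact_mod_cast h1
        linarith
      calc 1 = β⁻¹ * β := (inv_mul_cancel₀ hβ0.ne').symm
        _ < (B j : ℝ) * β := mul_lt_mul_of_pos_right h2 hβ0
    have hhalf : ∀ j : ℕ, 1 / (2 * (B j : ℝ)) ≤ 1 / 2 := by
      intro j
      apply one_div_le_one_div_of_le two_pos
      nlinarith [hB1R j]
    have hAlow : ∀ j : ℕ, (B j : ℝ) * β - 1 / 2 ≤ (A j : ℝ) := by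
      intro j
      have h := (abs_le.mp (hAB j)).2
      linarith [hhalf j]
    have hApos : ∀ j, 0 < A j := by
      intro j
      have : (0:ℝ) < (A j : ℝ) := by linarith [hAlow j, hBβ j]
      exact_mod_cast this
    refine ⟨fun j => (A j).toNat, fun j => ?_, ?_, fun j => ?_⟩
    · have := hApos j
      show 0 < (A j).toNat
      omega
    · rw [← tendsto_natCast_atTop_iff (R := ℝ)]
      apply tendsto_atTop_mono (fun j => ?_)
        (tendsto_atTop_add_const_right atTop (-(1/2) : ℝ)
          (Tendsto.const_mul_atTop hβ0 tendsto_natCast_atTop_atTop))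
      show β * (j:ℝ) + (-(1/2)) ≤ (((A j).toNat : ℕ) : ℝ)
      have hc : (((A j).toNat : ℕ) : ℝ) = (A j : ℝ) := by
        exact_mod_cast congrArg (Int.cast : ℤ → ℝ) (Int.toNat_of_nonneg (hApos j).le)
      rw [hc]
      have h1 : ((j:ℝ) + 1) * β ≤ (B j : ℝ) * β :=
        mul_le_mul_of_nonneg_right (hBj j) hβ0.le
      nlinarith [hAlow j, hβ0]
    · have hc : (((A j).toNat : ℕ) : ℝ) = (A j : ℝ) := by
        exact_mod_cast congrArg (Int.cast : ℤ → ℝ) (Int.toNat_of_nonneg (hApos j).le)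
      have hcZ : (((A j).toNat : ℕ) : ℤ) = A j := Int.toNat_of_nonneg (hApos j).le
      have hround : round (2 * (((A j).toNat : ℕ) : ℝ) / (1 + γ)) = B j := by
        rw [h2β, hc]
        apply round_eq_of_abs_lt
        have h1 : (A j : ℝ) / β - B j = -(((B j : ℝ) * β - A j) / β) := by
          field_simp
          ring
        rw [h1, abs_neg, abs_div, abs_of_pos hβ0, div_lt_iff₀ hβ0]
        have h2 : 1 / (2 * (B j : ℝ)) < 1 / 2 * β := by
          rw [div_lt_iff₀ (mul_pos two_pos (hBposR j))]
          nlinarith [hBβ j]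
        linarith [hAB j]
      rw [hround, hcZ, hQ _ _ (hBposR j).le]
      rw [abs_mul, abs_of_pos (mul_pos two_pos (hBposR j))]
      calc 2 * (B j : ℝ) * |(B j : ℝ) * β - A j| ≤ 2 * (B j : ℝ) * (1 / (2 * (B j : ℝ))) := by
            exact mul_le_mul_of_nonneg_left (hAB j) (mul_pos two_pos (hBposR j)).le
        _ = 1 := mul_one_div_cancel (ne_of_gt (mul_pos two_pos (hBposR j)))
end

section
/- Let c > 0 and σ > 0. For η ∈ (0, √(2cσ)) define k(η) := √((4cσ − 2η²)/(4cσ − η²)) ∈ (0,1) and T(η) := (4√c / √(4cσ − η²)) · K(k(η)). Then T is strictly decreasing on the interval (0, √(2cσ)): if 0 < η₁ < η₂ < √(2cσ) then T(η₂) < T(η₁). -/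
/-- Complete elliptic integral of the first kind,
`K(k) = ∫_0^1 dt / √((1−t²)(1−k²t²))`. -/
noncomputable def Kell (k : ℝ) : ℝ :=
  ∫ t in (0 : ℝ)..1, 1 / Real.sqrt ((1 - t ^ 2) * (1 - k ^ 2 * t ^ 2))

/-- The elliptic modulus of the dnoidal wave with parameters `c, σ, η`. -/
noncomputable def kmod (c σ η : ℝ) : ℝ :=
  Real.sqrt ((4 * c * σ - 2 * η ^ 2) / (4 * c * σ - η ^ 2))

/-- The fundamental period of the dnoidal wave with parameters `c, σ, η`. -/
noncomputable def Tper (c σ η : ℝ) : ℝ :=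
  4 * Real.sqrt c / Real.sqrt (4 * c * σ - η ^ 2) * Kell (kmod c σ η)

open Real Set MeasureTheory intervalIntegral


lemma core' {u v x y : ℝ} (hu : 0 < u) (huv : u < v) (hvx : v ≤ x) (hxy : x < y)
    (h : y^2 - x^2 = v^2 - u^2) : 1/x + 1/v < 1/y + 1/u := by
  have hx : 0 < x := lt_of_lt_of_le (hu.trans huv) hvx
  have hy : 0 < y := hx.trans hxy
  have hv : 0 < v := hu.trans huv
  have key : (y-x)*(y+x) = (v-u)*(v+u) := by linear_combination h
  have ha : u*v < x*y := by nlinarith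
  have hb : u+v < x+y := by linarith
  have h6 : u*v*(u+v) < x*y*(x+y) :=
    mul_lt_mul ha hb.le (by positivity) (by positivity)
  have h7 : (u*v*(y-x))*(x+y) < (x*y*(v-u))*(x+y) := by
    calc (u*v*(y-x))*(x+y) = (v-u)*(u*v*(u+v)) := by linear_combination (u*v)*key
    _ < (v-u)*(x*y*(x+y)) := by exact mul_lt_mul_of_pos_left h6 (by linarith)
    _ = (x*y*(v-u))*(x+y) := by ring
  have h8 : u*v*(y-x) < x*y*(v-u) := lt_of_mul_lt_mul_right h7 (by positivity)
  rw [div_add_div _ _ (ne_of_gt hx) (ne_of_gt hv), div_add_div _ _ (ne_of_gt hy) (ne_of_gt hu),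
    div_lt_div_iff₀ (by positivity) (by positivity)]
  nlinarith [h8]

lemma core {A B b₁ b₂ : ℝ} (h1 : 0 < B + b₁) (h12 : b₁ < b₂) (h2 : B + b₂ ≤ A - b₂) :
    1/Real.sqrt (A - b₂) + 1/Real.sqrt (B + b₂) < 1/Real.sqrt (A - b₁) + 1/Real.sqrt (B + b₁) := by
  have h3 : 0 < B + b₂ := by linarith
  have h4 : 0 < A - b₂ := lt_of_lt_of_le h3 h2
  have h5 : 0 < A - b₁ := by linarith
  apply core' (Real.sqrt_pos.2 h1) (Real.sqrt_lt_sqrt h1.le (by linarith))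
    (Real.sqrt_le_sqrt h2) (Real.sqrt_lt_sqrt h4.le (by linarith))
  rw [Real.sq_sqrt h5.le, Real.sq_sqrt h4.le, Real.sq_sqrt h3.le, Real.sq_sqrt h1.le]
  ring


lemma kell_integrand_meas (k : ℝ) :
    Measurable (fun t : ℝ => 1 / Real.sqrt ((1 - t ^ 2) * (1 - k ^ 2 * t ^ 2))) := by
  apply Measurable.div measurable_const
  exact Real.continuous_sqrt.measurable.comp (by fun_prop)

lemma rpow_half_eq (x : ℝ) (hx : 0 ≤ x) : x ^ (-(1/2) : ℝ) = (Real.sqrt x)⁻¹ := by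
  rw [Real.rpow_neg hx, Real.sqrt_eq_rpow]

lemma kell_integrable {k : ℝ} (hk0 : 0 ≤ k) (hk1 : k < 1) :
    IntervalIntegrable (fun t : ℝ => 1 / Real.sqrt ((1 - t ^ 2) * (1 - k ^ 2 * t ^ 2)))
      volume 0 1 := by
  have hk2 : 0 < 1 - k ^ 2 := by nlinarith
  have hb : IntervalIntegrable
      (fun t : ℝ => (Real.sqrt (1 - k ^ 2))⁻¹ * ((1 - t) ^ (-(1/2) : ℝ))) volume 0 1 := by
    have := (intervalIntegral.intervalIntegrable_rpow' (a := 1) (b := 0)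
      (r := (-(1/2) : ℝ)) (by norm_num)).comp_sub_left 1
    simpa using this.const_mul _
  apply hb.mono_fun ((kell_integrand_meas k).aestronglyMeasurable)
  rw [Set.uIoc_of_le (by norm_num : (0:ℝ) ≤ 1)]
  filter_upwards [MeasureTheory.ae_restrict_mem measurableSet_Ioc] with x hx
  have hx1 : x ≤ 1 := hx.2
  have hx0 : 0 < x := hx.1
  rcases eq_or_lt_of_le hx1 with rfl | hlt
  · simp
  · have h1x : (0:ℝ) < 1 - x := by linarith
    have hpos : 0 < (1 - x) * (1 - k ^ 2) := by positivity
    have hP : (1 - x) * (1 - k ^ 2) ≤ (1 - x ^ 2) * (1 - k ^ 2 * x ^ 2) := by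
      have ha : 1 - x ≤ 1 - x ^ 2 := by nlinarith
      have hb2 : 1 - k ^ 2 ≤ 1 - k ^ 2 * x ^ 2 := by nlinarith
      exact mul_le_mul ha hb2 hk2.le (by nlinarith)
    have e1 : ‖1 / Real.sqrt ((1 - x ^ 2) * (1 - k ^ 2 * x ^ 2))‖
        = 1 / Real.sqrt ((1 - x ^ 2) * (1 - k ^ 2 * x ^ 2)) := by
      rw [Real.norm_eq_abs, abs_of_nonneg (by positivity)]
    have e2 : ‖(Real.sqrt (1 - k ^ 2))⁻¹ * ((1 - x) ^ (-(1/2) : ℝ))‖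
        = (Real.sqrt (1 - k ^ 2))⁻¹ * ((1 - x) ^ (-(1/2) : ℝ)) := by
      rw [Real.norm_eq_abs, abs_of_nonneg]
      positivity
    rw [e1, e2, rpow_half_eq _ h1x.le]
    calc 1 / Real.sqrt ((1 - x ^ 2) * (1 - k ^ 2 * x ^ 2))
        ≤ 1 / Real.sqrt ((1 - x) * (1 - k ^ 2)) :=
          one_div_le_one_div_of_le (Real.sqrt_pos.2 hpos) (Real.sqrt_le_sqrt hP)
      _ = (Real.sqrt (1 - k ^ 2))⁻¹ * (Real.sqrt (1 - x))⁻¹ := by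
          rw [Real.sqrt_mul h1x.le, one_div, mul_inv, mul_comm]

lemma trig_cont {k : ℝ} (hk0 : 0 ≤ k) (hk1 : k < 1) :
    Continuous (fun θ : ℝ => 1 / Real.sqrt (1 - k ^ 2 * Real.sin θ ^ 2)) := by
  have hpos : ∀ θ : ℝ, 0 < 1 - k ^ 2 * Real.sin θ ^ 2 := by
    intro θ
    nlinarith [Real.sin_sq_le_one θ, sq_nonneg k, sq_nonneg (Real.sin θ),
      sq_nonneg (k * Real.sin θ)]
  exact continuous_const.div (Real.continuous_sqrt.comp (by fun_prop))
    (fun θ => (Real.sqrt_pos.2 (hpos θ)).ne')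

lemma kell_eq_trig {k : ℝ} (hk0 : 0 ≤ k) (hk1 : k < 1) :
    Kell k = ∫ θ in (0:ℝ)..(π/2), 1 / Real.sqrt (1 - k ^ 2 * Real.sin θ ^ 2) := by
  have hk2 : 0 < 1 - k ^ 2 := by nlinarith
  set g : ℝ → ℝ := fun θ => 1 / Real.sqrt (1 - k ^ 2 * Real.sin θ ^ 2) with hg
  set f' : ℝ → ℝ := fun x => 1 / Real.sqrt (1 - x ^ 2) with hf'
  have hpt : Set.EqOn (fun x => 1 / Real.sqrt ((1 - x ^ 2) * (1 - k ^ 2 * x ^ 2)))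
      (fun x => f' x • (g ∘ Real.arcsin) x) (Set.uIcc (0:ℝ) 1) := by
    intro x hx
    rw [Set.uIcc_of_le (by norm_num : (0:ℝ) ≤ 1)] at hx
    have h0 : (0:ℝ) ≤ x := hx.1
    have h1 : x ≤ 1 := hx.2
    have hsin : Real.sin (Real.arcsin x) = x := Real.sin_arcsin (by linarith) h1
    simp only [smul_eq_mul, Function.comp_apply, hg, hf', hsin]
    rw [Real.sqrt_mul (by nlinarith : (0:ℝ) ≤ 1 - x ^ 2), one_div, one_div, one_div, mul_inv]
  have key := intervalIntegral.integral_comp_smul_deriv''' (a := (0:ℝ)) (b := 1)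
    (f := Real.arcsin) (f' := f') (g := g)
    (Real.continuous_arcsin.continuousOn)
    (by
      intro x hx
      rw [min_eq_left (by norm_num : (0:ℝ) ≤ 1), max_eq_right (by norm_num : (0:ℝ) ≤ 1)] at hx
      have hne1 : x ≠ -1 := by intro h; rw [h] at hx; exact absurd hx.1 (by norm_num)
      exact (Real.hasDerivAt_arcsin hne1 (ne_of_lt hx.2)).hasDerivWithinAt)
    ((trig_cont hk0 hk1).continuousOn)
    (((trig_cont hk0 hk1).continuousOn).integrableOn_compact
      (isCompact_uIcc.image Real.continuous_arcsin))
    (((intervalIntegrable_iff' (h := enorm_ne_top)).mp (kell_integrable hk0 hk1)).congr_fun hpt measurableSet_uIcc)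
  rw [Kell, intervalIntegral.integral_congr hpt, key, Real.arcsin_zero, Real.arcsin_one]



noncomputable def Pfun (c σ η θ : ℝ) : ℝ :=
  4 * c * σ * Real.cos θ ^ 2 - η ^ 2 * Real.cos (2 * θ)

noncomputable def Gfun (c σ η θ : ℝ) : ℝ :=
  4 * c * σ * Real.sin θ ^ 2 + η ^ 2 * Real.cos (2 * θ)

lemma Pfun_pos {c σ η : ℝ} (hη : 0 < η ^ 2) (h2 : 2 * η ^ 2 ≤ 4 * c * σ) (θ : ℝ) :
    η ^ 2 ≤ Pfun c σ η θ := by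
  have h := Real.cos_sq θ
  have h1 := Real.neg_one_le_cos (2 * θ)
  have h3 := Real.cos_le_one (2 * θ)
  rw [Pfun, h]
  nlinarith

lemma Gfun_pos {c σ η : ℝ} (hη : 0 < η ^ 2) (h2 : 2 * η ^ 2 ≤ 4 * c * σ) (θ : ℝ) :
    η ^ 2 ≤ Gfun c σ η θ := by
  have h : Real.sin θ ^ 2 = 1 - Real.cos θ ^ 2 := Real.sin_sq θ
  have h4 := Real.cos_sq θ
  have h1 := Real.neg_one_le_cos (2 * θ)
  have h3 := Real.cos_le_one (2 * θ)
  rw [Gfun, h, h4]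
  nlinarith

lemma Pfun_cont {c σ η : ℝ} (hη : 0 < η ^ 2) (h2 : 2 * η ^ 2 ≤ 4 * c * σ) :
    Continuous (fun θ : ℝ => 1 / Real.sqrt (Pfun c σ η θ)) := by
  refine continuous_const.div (Real.continuous_sqrt.comp (by unfold Pfun; fun_prop)) ?_
  intro θ
  exact (Real.sqrt_pos.2 (lt_of_lt_of_le hη (Pfun_pos hη h2 θ))).ne'

lemma Gfun_cont {c σ η : ℝ} (hη : 0 < η ^ 2) (h2 : 2 * η ^ 2 ≤ 4 * c * σ) :
    Continuous (fun θ : ℝ => 1 / Real.sqrt (Gfun c σ η θ)) := by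
  refine continuous_const.div (Real.continuous_sqrt.comp (by unfold Gfun; fun_prop)) ?_
  intro θ
  exact (Real.sqrt_pos.2 (lt_of_lt_of_le hη (Gfun_pos hη h2 θ))).ne'

lemma tper_eq {c σ η : ℝ} (hc : 0 < c) (hσ : 0 < σ) (hη0 : 0 < η) (hη2 : η ^ 2 < 2 * c * σ) :
    Tper c σ η = 4 * Real.sqrt c *
      ∫ θ in (0:ℝ)..(π/4),
        (1 / Real.sqrt (Pfun c σ η θ) + 1 / Real.sqrt (Gfun c σ η θ)) := by
  have hη : 0 < η ^ 2 := by positivity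
  have h2 : 2 * η ^ 2 ≤ 4 * c * σ := by nlinarith
  have ha1 : 0 < 4 * c * σ - η ^ 2 := by nlinarith
  have ha2 : 0 < 4 * c * σ - 2 * η ^ 2 := by nlinarith
  have hknn : 0 ≤ (4 * c * σ - 2 * η ^ 2) / (4 * c * σ - η ^ 2) := by positivity
  have hk0 : 0 ≤ kmod c σ η := Real.sqrt_nonneg _
  have hksq : kmod c σ η ^ 2 = (4 * c * σ - 2 * η ^ 2) / (4 * c * σ - η ^ 2) :=
    Real.sq_sqrt hknn
  have hk1 : kmod c σ η < 1 := by
    rw [kmod, show (1:ℝ) = Real.sqrt 1 from Real.sqrt_one.symm]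
    exact Real.sqrt_lt_sqrt hknn ((div_lt_one ha1).2 (by nlinarith))
  -- step 1: Tper in terms of the P-integral over [0, π/2]
  have step1 : Tper c σ η = 4 * Real.sqrt c *
      ∫ θ in (0:ℝ)..(π/2), 1 / Real.sqrt (Pfun c σ η θ) := by
    have lhs_eq : Tper c σ η
        = 4 * Real.sqrt c * ((Real.sqrt (4 * c * σ - η ^ 2))⁻¹ * Kell (kmod c σ η)) := by
      rw [Tper]; ring
    rw [lhs_eq, kell_eq_trig hk0 hk1, ← intervalIntegral.integral_const_mul]
    congr 1
    apply intervalIntegral.integral_congr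
    intro θ _
    dsimp only
    have hprod : (4 * c * σ - η ^ 2) * (1 - kmod c σ η ^ 2 * Real.sin θ ^ 2)
        = Pfun c σ η θ := by
      rw [hksq, Pfun, Real.sin_sq θ, Real.cos_two_mul θ]
      field_simp
      ring
    rw [← hprod, Real.sqrt_mul ha1.le, one_div, one_div, mul_inv]
  rw [step1]
  congr 1
  -- step 2: split and reflect
  have hPc := Pfun_cont hη h2
  have hGc := Gfun_cont hη h2
  have hsplit : (∫ θ in (0:ℝ)..(π/4), 1 / Real.sqrt (Pfun c σ η θ))
      + (∫ θ in (π/4:ℝ)..(π/2), 1 / Real.sqrt (Pfun c σ η θ))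
      = ∫ θ in (0:ℝ)..(π/2), 1 / Real.sqrt (Pfun c σ η θ) :=
    intervalIntegral.integral_add_adjacent_intervals
      (hPc.intervalIntegrable _ _) (hPc.intervalIntegrable _ _)
  have hrefl : (∫ θ in (π/4:ℝ)..(π/2), 1 / Real.sqrt (Pfun c σ η θ))
      = ∫ θ in (0:ℝ)..(π/4), 1 / Real.sqrt (Gfun c σ η θ) := by
    have := intervalIntegral.integral_comp_sub_left (a := (0:ℝ)) (b := π/4)
      (fun θ => 1 / Real.sqrt (Pfun c σ η θ)) (π/2)
    have heq : (fun x : ℝ => 1 / Real.sqrt (Pfun c σ η (π/2 - x)))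
        = fun x : ℝ => 1 / Real.sqrt (Gfun c σ η x) := by
      funext x
      have e1 : Real.cos (π/2 - x) = Real.sin x := Real.cos_pi_div_two_sub x
      have e2 : Real.cos (2 * (π/2 - x)) = - Real.cos (2 * x) := by
        rw [show 2 * (π/2 - x) = π - 2 * x by ring, Real.cos_pi_sub]
      rw [Pfun, Gfun, e1, e2]
      ring_nf
    rw [heq, show π/2 - π/4 = π/4 by ring, show π/2 - (0:ℝ) = π/2 by ring] at this
    exact this.symm
  rw [← hsplit, hrefl, ← intervalIntegral.integral_add
    (hPc.intervalIntegrable _ _) (hGc.intervalIntegrable _ _)]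

/-- The dnoidal-wave period `T(η)` is strictly decreasing on `(0, √(2cσ))`. -/
theorem Tper_strictAnti (c σ : ℝ) (hc : 0 < c) (hσ : 0 < σ) :
    ∀ η₁ η₂ : ℝ, 0 < η₁ → η₁ < η₂ → η₂ < Real.sqrt (2 * c * σ) →
      Tper c σ η₂ < Tper c σ η₁ := by
  intro η₁ η₂ h1 h12 h2s
  have h2 : 0 < η₂ := h1.trans h12
  have hη₂sq : η₂ ^ 2 < 2 * c * σ := (Real.lt_sqrt h2.le).mp h2s
  have hη₁sq : η₁ ^ 2 < 2 * c * σ := by nlinarith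
  have hη₁ : 0 < η₁ ^ 2 := by positivity
  have hη₂ : 0 < η₂ ^ 2 := by positivity
  have hb₁ : 2 * η₁ ^ 2 ≤ 4 * c * σ := by nlinarith
  have hb₂ : 2 * η₂ ^ 2 ≤ 4 * c * σ := by nlinarith
  rw [tper_eq hc hσ h2 hη₂sq, tper_eq hc hσ h1 hη₁sq]
  have h4c : (0:ℝ) < 4 * Real.sqrt c := by positivity
  apply mul_lt_mul_of_pos_left _ h4c
  -- strict inequality of the integrals
  have hS₁ : Continuous (fun θ : ℝ =>
      1 / Real.sqrt (Pfun c σ η₁ θ) + 1 / Real.sqrt (Gfun c σ η₁ θ)) :=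
    (Pfun_cont hη₁ hb₁).add (Gfun_cont hη₁ hb₁)
  have hS₂ : Continuous (fun θ : ℝ =>
      1 / Real.sqrt (Pfun c σ η₂ θ) + 1 / Real.sqrt (Gfun c σ η₂ θ)) :=
    (Pfun_cont hη₂ hb₂).add (Gfun_cont hη₂ hb₂)
  have hpos : 0 < ∫ θ in (0:ℝ)..(π/4),
      ((1 / Real.sqrt (Pfun c σ η₁ θ) + 1 / Real.sqrt (Gfun c σ η₁ θ))
        - (1 / Real.sqrt (Pfun c σ η₂ θ) + 1 / Real.sqrt (Gfun c σ η₂ θ))) := by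
    apply intervalIntegral_pos_of_pos_on ((hS₁.sub hS₂).intervalIntegrable _ _)
    · intro θ hθ
      have hπ := Real.pi_pos
      have hcos : 0 < Real.cos (2 * θ) := by
        apply Real.cos_pos_of_mem_Ioo
        constructor <;> [linarith [hθ.1]; linarith [hθ.2]]
      rw [Pi.sub_apply, sub_pos]
      have hcore := core (A := 4 * c * σ * Real.cos θ ^ 2) (B := 4 * c * σ * Real.sin θ ^ 2)
        (b₁ := η₁ ^ 2 * Real.cos (2 * θ)) (b₂ := η₂ ^ 2 * Real.cos (2 * θ))
        (lt_of_lt_of_le hη₁ (Gfun_pos hη₁ hb₁ θ))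
        (mul_lt_mul_of_pos_right (by nlinarith) hcos)
        (by
          have hs : Real.sin θ ^ 2 = 1 - Real.cos θ ^ 2 := Real.sin_sq θ
          have hct : Real.cos (2 * θ) = 2 * Real.cos θ ^ 2 - 1 := Real.cos_two_mul θ
          nlinarith)
      exact hcore
    · have hπ := Real.pi_pos; linarith
  have hint : ∀ η : ℝ, 0 < η ^ 2 → 2 * η ^ 2 ≤ 4 * c * σ → IntervalIntegrable
      (fun θ : ℝ => 1 / Real.sqrt (Pfun c σ η θ) + 1 / Real.sqrt (Gfun c σ η θ))
      MeasureTheory.volume 0 (π/4) :=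
    fun η hη hb => ((Pfun_cont hη hb).add (Gfun_cont hη hb)).intervalIntegrable _ _
  have hsub := intervalIntegral.integral_sub (hint η₁ hη₁ hb₁) (hint η₂ hη₂ hb₂)
  rw [hsub] at hpos
  linarith
end

section
/- Let c > 0 and σ > 0. For η ∈ (0, √(2cσ)) define k(η) := √((4cσ − 2η²)/(4cσ − η²)) ∈ (0,1) and T(η) := (4√c / √(4cσ − η²)) · K(k(η)). Then T(η) > π√(2/σ) for every η ∈ (0, √(2cσ)), and for every L > π√(2/σ) there exists a unique η ∈ (0, √(2cσ)) with T(η) = L. -/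
open Real MeasureTheory Set intervalIntegral

lemma sin_lt_one' {θ : ℝ} (hθ : θ ∈ Set.Ioo 0 (π/2)) : Real.sin θ < 1 := by
  have hcos : 0 < Real.cos θ := Real.cos_pos_of_mem_Ioo
    ⟨by linarith [hθ.1, Real.pi_pos], hθ.2⟩
  have hsin : 0 < Real.sin θ := Real.sin_pos_of_pos_of_lt_pi hθ.1
    (hθ.2.trans (by linarith [Real.pi_pos]))
  nlinarith [Real.sin_sq_add_cos_sq θ]

lemma sin_image : Real.sin '' (Set.Ioo 0 (π/2)) = Set.Ioo (0:ℝ) 1 := by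
  ext t
  constructor
  · rintro ⟨θ, hθ, rfl⟩
    exact ⟨Real.sin_pos_of_pos_of_lt_pi hθ.1 (hθ.2.trans (by linarith [Real.pi_pos])),
      sin_lt_one' hθ⟩
  · intro ht
    exact ⟨Real.arcsin t, ⟨Real.arcsin_pos.2 ht.1, Real.arcsin_lt_pi_div_two.2 ht.2⟩,
      Real.sin_arcsin (by linarith [ht.1]) ht.2.le⟩

lemma kell_eq {k : ℝ} (hk0 : 0 ≤ k) (hk1 : k < 1) :
    Kell k = ∫ θ in (0:ℝ)..(π/2), (Real.sqrt (1 - k^2 * Real.sin θ^2))⁻¹ := by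
  have hpi : (0:ℝ) < π/2 := by positivity
  rw [Kell, intervalIntegral.integral_of_le zero_le_one,
    intervalIntegral.integral_of_le hpi.le,
    MeasureTheory.integral_Ioc_eq_integral_Ioo,
    MeasureTheory.integral_Ioc_eq_integral_Ioo, ← sin_image,
    MeasureTheory.integral_image_eq_integral_abs_deriv_smul measurableSet_Ioo
      (fun x _ => (Real.hasDerivAt_sin x).hasDerivWithinAt)
      (Real.injOn_sin.mono (fun x hx => by
        simp only [Set.mem_Ioo] at hx
        exact Set.mem_Icc.2 ⟨by linarith [hx.1, Real.pi_pos], hx.2.le⟩))]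
  refine MeasureTheory.setIntegral_congr_fun measurableSet_Ioo (fun θ hθ => ?_)
  have hcos : 0 < Real.cos θ := Real.cos_pos_of_mem_Ioo ⟨by linarith [hθ.1, Real.pi_pos], hθ.2⟩
  have h1 : (1:ℝ) - Real.sin θ^2 = Real.cos θ^2 := by
    have := Real.sin_sq_add_cos_sq θ; linarith
  have hks : 0 < 1 - k^2 * Real.sin θ^2 := by
    have hs1 : Real.sin θ < 1 := sin_lt_one' hθ
    have hsin : 0 < Real.sin θ := Real.sin_pos_of_pos_of_lt_pi hθ.1 (hθ.2.trans (by linarith [Real.pi_pos]))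
    nlinarith
  have : Real.sqrt ((1 - Real.sin θ^2) * (1 - k^2 * Real.sin θ^2))
      = Real.cos θ * Real.sqrt (1 - k^2 * Real.sin θ^2) := by
    rw [h1, Real.sqrt_mul (by positivity), Real.sqrt_sq hcos.le]
  simp only [smul_eq_mul, this, abs_of_pos hcos, one_div, mul_inv]
  have hsq : Real.sqrt (1 - k^2 * Real.sin θ^2) ≠ 0 := by positivity
  field_simp

noncomputable def Ig (a b θ : ℝ) : ℝ := (Real.sqrt (b + (a - 2*b) * Real.cos θ ^ 2))⁻¹
noncomputable def J (a b : ℝ) : ℝ := ∫ θ in (0:ℝ)..(π/2), Ig a b θ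


lemma kell_J {a b : ℝ} (hb0 : 0 < b) (hab : 2*b < a) :
    (Real.sqrt (a - b))⁻¹ * Kell (Real.sqrt ((a - 2*b)/(a - b))) = J a b := by
  have hab1 : 0 < a - b := by linarith
  have hab2 : 0 ≤ a - 2*b := by linarith
  set k := Real.sqrt ((a - 2*b)/(a - b)) with hk
  have hk2 : k^2 = (a - 2*b) / (a - b) := Real.sq_sqrt (div_nonneg hab2 hab1.le)
  have hk0 : 0 ≤ k := Real.sqrt_nonneg _
  have hk1 : k < 1 := by
    rw [hk, show (1:ℝ) = Real.sqrt 1 by simp]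
    exact Real.sqrt_lt_sqrt (div_nonneg hab2 hab1.le) (by rw [div_lt_one hab1]; linarith)
  rw [kell_eq hk0 hk1, J, ← intervalIntegral.integral_const_mul]
  apply intervalIntegral.integral_congr
  intro θ _
  have hs := Real.sin_sq_add_cos_sq θ
  have hX : 0 ≤ 1 - k^2 * Real.sin θ^2 := by
    rw [hk2]
    have h1 : (a - 2*b)/(a - b) ≤ 1 := by rw [div_le_one hab1]; linarith
    nlinarith [sq_nonneg (Real.sin θ), sq_nonneg (Real.cos θ),
      div_nonneg hab2 hab1.le]
  have h1 : (a - b) * (1 - k^2 * Real.sin θ^2) = b + (a - 2*b) * Real.cos θ^2 := by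
    rw [hk2]; field_simp; nlinarith
  rw [Ig, ← h1, Real.sqrt_mul hab1.le, mul_inv]

lemma tper_eq_s16 {c σ η : ℝ} (hc : 0 < c) (hσ : 0 < σ) (hη : 0 < η) (hb : η^2 < 2*c*σ) :
    Tper c σ η = 4 * Real.sqrt c * J (4*c*σ) (η^2) := by
  have h1 : kmod c σ η = Real.sqrt ((4*c*σ - 2*η^2)/(4*c*σ - η^2)) := rfl
  rw [Tper, ← kell_J (a := 4*c*σ) (b := η^2) (by positivity) (by linarith), h1]
  ring

noncomputable def phi (a x : ℝ) : ℝ := (Real.sqrt x)⁻¹ + (Real.sqrt (a - x))⁻¹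

lemma denom_pos {a b : ℝ} (hb0 : 0 < b) (hab : 2*b ≤ a) (θ : ℝ) :
    0 < b + (a - 2*b) * Real.cos θ ^ 2 := by
  have := mul_nonneg (by linarith : (0:ℝ) ≤ a - 2*b) (sq_nonneg (Real.cos θ))
  linarith

lemma Ig_cont {a b : ℝ} (hb0 : 0 < b) (hab : 2*b ≤ a) : Continuous (Ig a b) := by
  apply Continuous.inv₀
  · exact Real.continuous_sqrt.comp (by continuity)
  · intro θ
    exact (Real.sqrt_ne_zero'.2 (denom_pos hb0 hab θ))

lemma Ig_pos {a b : ℝ} (hb0 : 0 < b) (hab : 2*b ≤ a) (θ : ℝ) : 0 < Ig a b θ :=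
  inv_pos.2 (Real.sqrt_pos.2 (denom_pos hb0 hab θ))

lemma fold {a b : ℝ} (hb0 : 0 < b) (hab : 2*b ≤ a) :
    J a b = ∫ θ in (0:ℝ)..(π/4), (Ig a b θ + Ig a b (π/2 - θ)) := by
  have hc := Ig_cont hb0 hab
  have h1 : J a b = (∫ θ in (0:ℝ)..(π/4), Ig a b θ) + ∫ θ in (π/4:ℝ)..(π/2), Ig a b θ := by
    rw [J, intervalIntegral.integral_add_adjacent_intervals
      (hc.intervalIntegrable _ _) (hc.intervalIntegrable _ _)]
  have hc2 : Continuous (fun θ => Ig a b (π/2 - θ)) := hc.comp (by continuity)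
  have h2 : (∫ θ in (π/4:ℝ)..(π/2), Ig a b θ) = ∫ θ in (0:ℝ)..(π/4), Ig a b (π/2 - θ) := by
    rw [intervalIntegral.integral_comp_sub_left (Ig a b) (π/2)]
    rw [show π/2 - π/4 = π/4 by ring, sub_zero]
  rw [h1, h2, ← intervalIntegral.integral_add (hc.intervalIntegrable _ _)
    (hc2.intervalIntegrable _ _)]

lemma Q_eq_phi (a b θ : ℝ) : Ig a b θ + Ig a b (π/2 - θ) = phi a (b + (a - 2*b) * Real.cos θ ^ 2) := by
  have hs := Real.sin_sq_add_cos_sq θ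
  rw [phi, Ig, Ig, Real.cos_pi_div_two_sub]
  have h : a - (b + (a - 2*b) * Real.cos θ^2) = b + (a - 2*b) * Real.sin θ^2 := by linear_combination (2*b - a) * hs
  rw [h]

lemma phi_strictMono {a : ℝ} (ha : 0 < a) : StrictMonoOn (phi a) (Set.Ico (a/2) a) := by
  have hconv : Convex ℝ (Set.Ico (a/2) a) := convex_Ico _ _
  apply strictMonoOn_of_deriv_pos hconv
  · apply ContinuousOn.add
    · exact (Real.continuous_sqrt.continuousOn).inv₀ (fun x hx =>
        Real.sqrt_ne_zero'.2 (by have := hx.1; linarith))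
    · exact ((Real.continuous_sqrt.comp (continuous_const.sub continuous_id)).continuousOn).inv₀
        (fun x hx => Real.sqrt_ne_zero'.2 (by have := hx.2; simp; linarith))
  · intro x hx
    rw [interior_Ico] at hx
    have hx0 : 0 < x := by have := hx.1; linarith
    have hax : 0 < a - x := by have := hx.2; linarith
    have hxax : a - x < x := by have := hx.1; linarith
    have h1 : HasDerivAt (fun y => (Real.sqrt y)⁻¹) (-(1 / (2 * Real.sqrt x)) / (Real.sqrt x)^2) x :=
      (Real.hasDerivAt_sqrt hx0.ne').inv (Real.sqrt_ne_zero'.2 hx0)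
    have h2' : HasDerivAt (fun y => Real.sqrt (a - y)) (-(1 / (2 * Real.sqrt (a - x)))) x := by
      have := (Real.hasDerivAt_sqrt hax.ne').comp x ((hasDerivAt_id x).const_sub a)
      simp at this ⊢; exact this
    have h2 : HasDerivAt (fun y => (Real.sqrt (a - y))⁻¹)
        (-(-(1 / (2 * Real.sqrt (a - x)))) / (Real.sqrt (a - x))^2) x :=
      h2'.inv (Real.sqrt_ne_zero'.2 hax)
    have hD : HasDerivAt (phi a)
        (-(1 / (2 * Real.sqrt x)) / (Real.sqrt x)^2 + -(-(1 / (2 * Real.sqrt (a - x)))) / (Real.sqrt (a - x))^2) x := h1.add h2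
    rw [hD.deriv]
    have hsx : (0:ℝ) < Real.sqrt x := Real.sqrt_pos.2 hx0
    have hsax : (0:ℝ) < Real.sqrt (a - x) := Real.sqrt_pos.2 hax
    have hsq1 : (Real.sqrt x)^2 = x := Real.sq_sqrt hx0.le
    have hsq2 : (Real.sqrt (a - x))^2 = a - x := Real.sq_sqrt hax.le
    rw [hsq1, hsq2]
    have hkey : Real.sqrt (a - x) * (a - x) < Real.sqrt x * x :=
      mul_lt_mul (Real.sqrt_lt_sqrt hax.le hxax) hxax.le hax hsx.le
    have key2 : (1:ℝ)/(2*Real.sqrt x)/x < 1/(2*Real.sqrt (a-x))/(a-x) := by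
      rw [div_div, div_div]
      apply one_div_lt_one_div_of_lt (by positivity)
      nlinarith [hkey]
    simp only [neg_div, neg_neg]
    linarith [key2]

lemma cos_sq_ge {θ : ℝ} (h0 : 0 ≤ θ) (h1 : θ ≤ π/4) : 1/2 ≤ Real.cos θ ^ 2 := by
  have h2 : Real.cos (π/4) ≤ Real.cos θ := by
    apply Real.cos_le_cos_of_nonneg_of_le_pi h0 (by linarith [Real.pi_pos]) h1
  rw [Real.cos_pi_div_four] at h2
  nlinarith [Real.sqrt_nonneg 2, Real.sq_sqrt (by norm_num : (2:ℝ) ≥ 0)]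

lemma cos_sq_gt {θ : ℝ} (h0 : 0 ≤ θ) (h1 : θ < π/4) : 1/2 < Real.cos θ ^ 2 := by
  have h2 : Real.cos (π/4) < Real.cos θ := by
    apply Real.strictAntiOn_cos ⟨h0, by linarith [Real.pi_pos]⟩
      ⟨by positivity, by linarith [Real.pi_pos]⟩ h1
  rw [Real.cos_pi_div_four] at h2
  nlinarith [Real.sqrt_nonneg 2, Real.sq_sqrt (by norm_num : (2:ℝ) ≥ 0)]

lemma x_mem {a b θ : ℝ} (ha : 0 < a) (hb0 : 0 < b) (hab : 2*b ≤ a) (hc2 : 1/2 ≤ Real.cos θ ^ 2) :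
    b + (a - 2*b) * Real.cos θ ^ 2 ∈ Set.Ico (a/2) a := by
  have hcos1 : Real.cos θ ^ 2 ≤ 1 := by
    nlinarith [Real.sin_sq_add_cos_sq θ, sq_nonneg (Real.sin θ)]
  constructor
  · nlinarith
  · nlinarith

lemma Q_lt {a b₁ b₂ θ : ℝ} (ha : 0 < a) (h1 : 0 < b₁) (h2 : b₁ < b₂) (h3 : b₂ ≤ a/2)
    (h0 : 0 ≤ θ) (hθ : θ ≤ π/4) :
    Ig a b₂ θ + Ig a b₂ (π/2 - θ) ≤ Ig a b₁ θ + Ig a b₁ (π/2 - θ) := by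
  rw [Q_eq_phi, Q_eq_phi]
  have hcs := cos_sq_ge h0 hθ
  have m1 := x_mem ha h1 (by linarith) hcs (a := a) (θ := θ)
  have m2 := x_mem ha (by linarith : 0 < b₂) (by linarith) hcs (a := a) (θ := θ)
  exact (phi_strictMono ha).monotoneOn m2 m1 (by nlinarith)

lemma Q_lt_strict {a b₁ b₂ θ : ℝ} (ha : 0 < a) (h1 : 0 < b₁) (h2 : b₁ < b₂) (h3 : b₂ ≤ a/2)
    (h0 : 0 ≤ θ) (hθ : θ < π/4) :
    Ig a b₂ θ + Ig a b₂ (π/2 - θ) < Ig a b₁ θ + Ig a b₁ (π/2 - θ) := by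
  rw [Q_eq_phi, Q_eq_phi]
  have hcs := cos_sq_gt h0 hθ
  have m1 := x_mem ha h1 (by linarith) hcs.le (a := a) (θ := θ)
  have m2 := x_mem ha (by linarith : 0 < b₂) (by linarith) hcs.le (a := a) (θ := θ)
  exact phi_strictMono ha m2 m1 (by nlinarith)

lemma J_strictAnti {a : ℝ} (ha : 0 < a) : StrictAntiOn (J a) (Set.Ioc 0 (a/2)) := by
  intro b₁ hb₁ b₂ hb₂ hlt
  rw [fold hb₁.1 (by linarith [hb₁.2] : 2*b₁ ≤ a), fold hb₂.1 (by linarith [hb₂.2] : 2*b₂ ≤ a)]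
  have hpi4 : (0:ℝ) < π/4 := by positivity
  apply intervalIntegral.integral_lt_integral_of_continuousOn_of_le_of_exists_lt hpi4
  · exact (((Ig_cont hb₂.1 (by linarith [hb₂.2])).add
      ((Ig_cont hb₂.1 (by linarith [hb₂.2])).comp (by continuity))).continuousOn)
  · exact (((Ig_cont hb₁.1 (by linarith [hb₁.2])).add
      ((Ig_cont hb₁.1 (by linarith [hb₁.2])).comp (by continuity))).continuousOn)
  · intro θ hθ
    exact Q_lt ha hb₁.1 hlt hb₂.2 hθ.1.le hθ.2
  · exact ⟨0, ⟨le_refl 0, hpi4.le⟩, Q_lt_strict ha hb₁.1 hlt hb₂.2 le_rfl hpi4⟩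

lemma J_half {a : ℝ} (ha : 0 < a) : J a (a/2) = (π/2) * (Real.sqrt (a/2))⁻¹ := by
  have : ∀ θ : ℝ, Ig a (a/2) θ = (Real.sqrt (a/2))⁻¹ := by
    intro θ
    rw [Ig, show a/2 + (a - 2*(a/2)) * Real.cos θ^2 = a/2 by ring]
  simp only [J, this, intervalIntegral.integral_const, smul_eq_mul, sub_zero]

lemma J_contOn {a : ℝ} (ha : 0 < a) : ContinuousOn (J a) (Set.Ioc 0 (a/2)) := by
  rw [continuousOn_iff_continuous_restrict]
  have hu : Continuous (Function.uncurry
      (fun (x : Set.Ioc (0:ℝ) (a/2)) (θ : ℝ) => Ig a (x:ℝ) θ)) := by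
    apply Continuous.inv₀
    · apply Real.continuous_sqrt.comp
      have c1 : Continuous (fun p : Set.Ioc (0:ℝ) (a/2) × ℝ => (p.1 : ℝ)) :=
        continuous_subtype_val.comp continuous_fst
      have c2 : Continuous (fun p : Set.Ioc (0:ℝ) (a/2) × ℝ => Real.cos p.2) :=
        Real.continuous_cos.comp continuous_snd
      exact c1.add (((continuous_const.sub (continuous_const.mul c1)).mul (c2.pow 2)))
    · rintro ⟨x, θ⟩
      exact Real.sqrt_ne_zero'.2 (denom_pos x.2.1 (by linarith [x.2.2]) θ)
  exact intervalIntegral.continuous_parametric_intervalIntegral_of_continuous' hu 0 (π/2)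

lemma sqrt_add_le {x y : ℝ} (hx : 0 ≤ x) (hy : 0 ≤ y) :
    Real.sqrt (x + y) ≤ Real.sqrt x + Real.sqrt y := by
  rw [Real.sqrt_le_iff]
  constructor
  · positivity
  · nlinarith [Real.sq_sqrt hx, Real.sq_sqrt hy, Real.sqrt_nonneg x, Real.sqrt_nonneg y]

lemma J_lower {a b : ℝ} (ha : 0 < a) (hb0 : 0 < b) (hab : 2*b ≤ a) :
    (Real.sqrt a)⁻¹ * Real.log ((Real.sqrt b + Real.sqrt a * (π/2)) / Real.sqrt b) ≤ J a b := by
  have hpi : (0:ℝ) < π/2 := by positivity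
  have hsb : 0 < Real.sqrt b := Real.sqrt_pos.2 hb0
  have hsa : 0 < Real.sqrt a := Real.sqrt_pos.2 ha
  -- the comparison function
  set g : ℝ → ℝ := fun θ => (Real.sqrt b + Real.sqrt a * (π/2 - θ))⁻¹ with hg
  have hgc : ContinuousOn g (Set.Icc 0 (π/2)) := by
    apply ContinuousOn.inv₀ (by fun_prop)
    intro θ hθ
    have : 0 ≤ π/2 - θ := by linarith [hθ.2]
    positivity
  have hmono : ∀ θ ∈ Set.Icc (0:ℝ) (π/2), g θ ≤ Ig a b θ := by
    intro θ hθ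
    have hc0 : 0 ≤ Real.cos θ := Real.cos_nonneg_of_mem_Icc ⟨by linarith [hθ.1, Real.pi_pos], hθ.2⟩
    have key : Real.sqrt (b + (a - 2*b) * Real.cos θ^2) ≤ Real.sqrt b + Real.sqrt a * (π/2 - θ) := by
      have s1 : Real.sqrt (b + (a - 2*b) * Real.cos θ^2) ≤ Real.sqrt (b + a * Real.cos θ^2) := by
        apply Real.sqrt_le_sqrt
        nlinarith [sq_nonneg (Real.cos θ)]
      have s2 : Real.sqrt (b + a * Real.cos θ^2) ≤ Real.sqrt b + Real.sqrt a * Real.cos θ := by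
        calc Real.sqrt (b + a * Real.cos θ^2)
            ≤ Real.sqrt b + Real.sqrt (a * Real.cos θ^2) := sqrt_add_le hb0.le (by positivity)
          _ = Real.sqrt b + Real.sqrt a * Real.cos θ := by
              rw [Real.sqrt_mul ha.le, Real.sqrt_sq hc0]
      have s3 : Real.cos θ ≤ π/2 - θ := by
        have := Real.sin_le (by linarith [hθ.2] : 0 ≤ π/2 - θ)
        rwa [Real.sin_pi_div_two_sub] at this
      have s4 : Real.sqrt b + Real.sqrt a * Real.cos θ ≤ Real.sqrt b + Real.sqrt a * (π/2 - θ) := by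
        nlinarith
      linarith
    rw [Ig, hg]
    apply inv_anti₀ (Real.sqrt_pos.2 (denom_pos hb0 hab θ)) key
  have hint : (∫ θ in (0:ℝ)..(π/2), g θ) ≤ J a b := by
    rw [J]
    apply intervalIntegral.integral_mono_on hpi.le
    · exact hgc.intervalIntegrable_of_Icc hpi.le
    · exact (Ig_cont hb0 hab).intervalIntegrable _ _
    · exact hmono
  refine le_trans (le_of_eq ?_) hint
  -- compute ∫ g
  have e1 : (∫ θ in (0:ℝ)..(π/2), g θ) = ∫ u in (0:ℝ)..(π/2), (Real.sqrt b + Real.sqrt a * u)⁻¹ := by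
    rw [show (∫ θ in (0:ℝ)..(π/2), g θ)
        = ∫ θ in (0:ℝ)..(π/2), (fun u => (Real.sqrt b + Real.sqrt a * u)⁻¹) (π/2 - θ) from rfl]
    rw [intervalIntegral.integral_comp_sub_left (fun u => (Real.sqrt b + Real.sqrt a * u)⁻¹) (π/2)]
    rw [sub_zero, show π/2 - π/2 = 0 by ring]
  rw [e1]
  rw [show (∫ u in (0:ℝ)..(π/2), (Real.sqrt b + Real.sqrt a * u)⁻¹)
      = ∫ u in (0:ℝ)..(π/2), (fun x => x⁻¹) (Real.sqrt b + Real.sqrt a * u) from rfl]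
  rw [intervalIntegral.integral_comp_add_mul (fun x => x⁻¹) hsa.ne' (Real.sqrt b)]
  rw [mul_zero, add_zero, smul_eq_mul]
  congr 1
  rw [show (∫ x in (Real.sqrt b)..(Real.sqrt b + Real.sqrt a * (π/2)), x⁻¹)
      = ∫ x in (Real.sqrt b)..(Real.sqrt b + Real.sqrt a * (π/2)), 1/x by
    apply intervalIntegral.integral_congr; intro x _; rw [one_div]]
  rw [integral_one_div]
  intro hmem
  rcases hmem with hmem
  have h1 : 0 < Real.sqrt b := hsb
  have h2 : 0 < Real.sqrt b + Real.sqrt a * (π/2) := by positivity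
  rcases Set.mem_uIcc.1 hmem with ⟨h3, _⟩ | ⟨h3, _⟩ <;> linarith

lemma exists_large {a : ℝ} (ha : 0 < a) (M : ℝ) :
    ∃ b ∈ Set.Ioo (0:ℝ) (a/2),
      M < (Real.sqrt a)⁻¹ * Real.log ((Real.sqrt b + Real.sqrt a * (π/2)) / Real.sqrt b) := by
  have hsa : 0 < Real.sqrt a := Real.sqrt_pos.2 ha
  have key : Filter.Tendsto
      (fun b : ℝ => (Real.sqrt a)⁻¹ * Real.log ((Real.sqrt b + Real.sqrt a * (π/2)) / Real.sqrt b))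
      (nhdsWithin 0 (Set.Ioi 0)) Filter.atTop := by
    have h0 : Filter.Tendsto (fun b : ℝ => Real.sqrt b) (nhdsWithin 0 (Set.Ioi 0))
        (nhdsWithin 0 (Set.Ioi 0)) := by
      apply tendsto_nhdsWithin_of_tendsto_nhds_of_eventually_within
      · have := (Real.continuous_sqrt.tendsto 0)
        simpa using this.mono_left nhdsWithin_le_nhds
      · filter_upwards [self_mem_nhdsWithin] with b hb
        exact Real.sqrt_pos.2 hb
    have hinv : Filter.Tendsto (fun b : ℝ => (Real.sqrt b)⁻¹) (nhdsWithin 0 (Set.Ioi 0))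
        Filter.atTop := tendsto_inv_nhdsGT_zero.comp h0
    have hmul : Filter.Tendsto (fun b : ℝ => Real.sqrt a * (π/2) * (Real.sqrt b)⁻¹ + 1)
        (nhdsWithin 0 (Set.Ioi 0)) Filter.atTop :=
      Filter.tendsto_atTop_add_const_right _ 1 (hinv.const_mul_atTop (by positivity))
    have hlog := Real.tendsto_log_atTop.comp hmul
    have := hlog.const_mul_atTop (show (0:ℝ) < (Real.sqrt a)⁻¹ by positivity)
    apply this.congr'
    filter_upwards [self_mem_nhdsWithin] with b hb
    have hsb : 0 < Real.sqrt b := Real.sqrt_pos.2 hb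
    congr 1
    rw [Function.comp]
    congr 1
    field_simp
    ring
  have h1 : ∀ᶠ b in nhdsWithin (0:ℝ) (Set.Ioi 0),
      M < (Real.sqrt a)⁻¹ * Real.log ((Real.sqrt b + Real.sqrt a * (π/2)) / Real.sqrt b) :=
    key.eventually_gt_atTop M
  have h2 : ∀ᶠ b in nhdsWithin (0:ℝ) (Set.Ioi 0), b ∈ Set.Ioo (0:ℝ) (a/2) := by
    have hIio : Set.Iio (a/2) ∈ nhdsWithin (0:ℝ) (Set.Ioi 0) :=
      nhdsWithin_le_nhds (Iio_mem_nhds (by positivity))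
    filter_upwards [self_mem_nhdsWithin, hIio] with b hb hb'
    exact ⟨hb, hb'⟩
  obtain ⟨b, hb1, hb2⟩ := (h2.and h1).exists
  exact ⟨b, hb1, hb2⟩

/-- The dnoidal-wave period satisfies `T(η) > π√(2/σ)` on `(0, √(2cσ))`, and every
`L > π√(2/σ)` is attained exactly once. -/
theorem Tper_range_and_bijective (c σ : ℝ) (hc : 0 < c) (hσ : 0 < σ) :
    (∀ η ∈ Set.Ioo (0 : ℝ) (Real.sqrt (2 * c * σ)),
        Real.pi * Real.sqrt (2 / σ) < Tper c σ η) ∧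
    ∀ L : ℝ, Real.pi * Real.sqrt (2 / σ) < L →
      ∃! η : ℝ, η ∈ Set.Ioo (0 : ℝ) (Real.sqrt (2 * c * σ)) ∧ Tper c σ η = L := by
  set a := 4*c*σ with hadef
  have ha : 0 < a := by positivity
  have hhalf : a/2 = 2*c*σ := by rw [hadef]; ring
  have hsc : 0 < Real.sqrt c := Real.sqrt_pos.2 hc
  -- membership translation
  have hmem : ∀ η : ℝ, η ∈ Set.Ioo (0:ℝ) (Real.sqrt (2*c*σ)) ↔ 0 < η ∧ η^2 < a/2 := by
    intro η
    rw [Set.mem_Ioo, hhalf]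
    constructor
    · rintro ⟨h1, h2⟩
      exact ⟨h1, (Real.lt_sqrt h1.le).1 h2⟩
    · rintro ⟨h1, h2⟩
      exact ⟨h1, (Real.lt_sqrt h1.le).2 h2⟩
  -- the value at the endpoint
  have hval : 4 * Real.sqrt c * ((π/2) * (Real.sqrt (a/2))⁻¹) = π * Real.sqrt (2/σ) := by
    have h22 : Real.sqrt 2 ^ 2 = (2:ℝ) := Real.sq_sqrt (by norm_num)
    have hs2 : 0 < Real.sqrt 2 := Real.sqrt_pos.2 (by norm_num)
    have hsσ : 0 < Real.sqrt σ := Real.sqrt_pos.2 hσ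
    rw [hhalf, show 2*c*σ = c * (2*σ) by ring, Real.sqrt_mul hc.le,
      Real.sqrt_div (by norm_num : (0:ℝ) ≤ 2) σ,
      show (2:ℝ)*σ = 2*σ from rfl, Real.sqrt_mul (by norm_num : (0:ℝ) ≤ 2) σ]
    field_simp
    linear_combination (-2) * h22
  -- f
  set f : ℝ → ℝ := fun b => 4 * Real.sqrt c * J a b with hf
  have hTf : ∀ η : ℝ, 0 < η → η^2 < a/2 → Tper c σ η = f (η^2) := by
    intro η h1 h2
    rw [hf]
    exact tper_eq_s16 hc hσ h1 (by rw [← hhalf]; exact h2)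
  have hfanti : StrictAntiOn f (Set.Ioc 0 (a/2)) := by
    intro b₁ h₁ b₂ h₂ h
    exact mul_lt_mul_of_pos_left (J_strictAnti ha h₁ h₂ h) (by positivity)
  have hfhalf : f (a/2) = π * Real.sqrt (2/σ) := by
    rw [hf]; simp only; rw [J_half ha]; exact hval
  have hhalfmem : a/2 ∈ Set.Ioc (0:ℝ) (a/2) := ⟨by positivity, le_refl _⟩
  constructor
  · intro η hη
    obtain ⟨h1, h2⟩ := (hmem η).1 hη
    rw [hTf η h1 h2, ← hfhalf]
    exact hfanti ⟨by positivity, h2.le⟩ hhalfmem h2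
  · intro L hL
    -- find b₁ with f b₁ > L
    obtain ⟨b₁, hb₁, hlow⟩ := exists_large ha (L / (4 * Real.sqrt c))
    have hJb₁ : L / (4 * Real.sqrt c) < J a b₁ :=
      lt_of_lt_of_le hlow (J_lower ha hb₁.1 (by linarith [hb₁.2]))
    have hfb₁ : L < f b₁ := by
      rw [hf]
      have h4c : (0:ℝ) < 4 * Real.sqrt c := by positivity
      calc L = 4 * Real.sqrt c * (L / (4 * Real.sqrt c)) := by field_simp
        _ < 4 * Real.sqrt c * J a b₁ := by
            exact mul_lt_mul_of_pos_left hJb₁ h4c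
    -- IVT
    have hcont : ContinuousOn f (Set.Icc b₁ (a/2)) := by
      apply (continuousOn_const.mul ((J_contOn ha).mono ?_))
      intro x hx
      exact ⟨lt_of_lt_of_le hb₁.1 hx.1, hx.2⟩
    have hIVT := intermediate_value_Ioo' (le_of_lt hb₁.2) hcont
    have hLmem : L ∈ Set.Ioo (f (a/2)) (f b₁) := ⟨by rw [hfhalf]; exact hL, hfb₁⟩
    obtain ⟨b, hbmem, hfb⟩ := hIVT hLmem
    have hb0 : 0 < b := lt_trans hb₁.1 hbmem.1
    have hbh : b < a/2 := hbmem.2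
    refine ⟨Real.sqrt b, ⟨?_, ?_⟩, ?_⟩
    · refine (hmem _).2 ⟨Real.sqrt_pos.2 hb0, ?_⟩
      rw [Real.sq_sqrt hb0.le]; exact hbh
    · rw [hTf _ (Real.sqrt_pos.2 hb0) (by rw [Real.sq_sqrt hb0.le]; exact hbh),
        Real.sq_sqrt hb0.le, hfb]
    · rintro y ⟨hy1, hy2⟩
      obtain ⟨hy0, hyh⟩ := (hmem y).1 hy1
      rw [hTf y hy0 hyh] at hy2
      have heq : f (y^2) = f b := by rw [hy2, hfb]
      have : y^2 = b := hfanti.injOn ⟨by positivity, hyh.le⟩ ⟨hb0, hbh.le⟩ heq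
      rw [← this, Real.sqrt_sq hy0.le]
end
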